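/- arXiv:2401.14473 — 5 statements merged into one kernel-verified Lean document; each statement's English description precedes it below -/
import Mathlib

section
/- Every entire power series f in the class K is a weak clan: liminf_{t→∞} σ_f(t)/m_f(t) = 0. -/
open Filter MeasureTheory Topology Real
open scoped ENNReal

noncomputable section

/-- The filter describing `t ↑ R`: `atTop` if `R = ∞`, else approach `R` from below. -/
def nhdsLT (R : ℝ≥0∞) : Filter ℝ :=
  if R = ⊤ then atTop else nhdsWithin R.toReal (Set.Iio R.toReal)

/-- The class `K`: nonnegative coefficients, `a 0 > 0`, some `a n > 0` with `n ≥ 1`,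
and radius of convergence exactly `R` (all power-type sums converge for `0 < t < R`,
and the basic sum diverges for `t > R`). -/
def IsKClass (a : ℕ → ℝ) (R : ℝ≥0∞) : Prop :=
  (∀ n, 0 ≤ a n) ∧ 0 < a 0 ∧ (∃ n, 1 ≤ n ∧ 0 < a n) ∧
  (∀ β t : ℝ, 0 < t → ENNReal.ofReal t < R →
    Summable (fun n : ℕ => (n : ℝ) ^ β * a n * t ^ n)) ∧
  (∀ t : ℝ, 0 < t → R < ENNReal.ofReal t → ¬ Summable (fun n : ℕ => a n * t ^ n))

/-- `f(t) = Σ aₙ tⁿ`. -/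
def fsum (a : ℕ → ℝ) (t : ℝ) : ℝ := ∑' n : ℕ, a n * t ^ n

/-- `E(X_t^β) = (Σ n^β aₙ tⁿ)/f(t)`. -/
def moment (a : ℕ → ℝ) (β : ℝ) (t : ℝ) : ℝ :=
  (∑' n : ℕ, (n : ℝ) ^ β * a n * t ^ n) / fsum a t

/-- The mean `m_f(t) = E(X_t)`. -/
def mf (a : ℕ → ℝ) (t : ℝ) : ℝ := moment a 1 t

/-- The variance `σ_f²(t) = E(X_t²) − m_f(t)²`. -/
def varf (a : ℕ → ℝ) (t : ℝ) : ℝ := moment a 2 t - (mf a t) ^ 2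

/-- `σ_f(t)`, the nonnegative square root of the variance. -/
def sigmaf (a : ℕ → ℝ) (t : ℝ) : ℝ := Real.sqrt (varf a t)

/-- `f` is a clan if `σ_f(t)/m_f(t) → 0` as `t ↑ R`. -/
def IsClan (a : ℕ → ℝ) (R : ℝ≥0∞) : Prop :=
  Tendsto (fun t => sigmaf a t / mf a t) (nhdsLT R) (𝓝 0)

namespace WeakClanAux

/-- `Σ n aₙ tⁿ`. -/
def Bs (a : ℕ → ℝ) (t : ℝ) : ℝ := ∑' n : ℕ, (n : ℝ) * a n * t ^ n

/-- `Σ n² aₙ tⁿ`. -/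
def Cs (a : ℕ → ℝ) (t : ℝ) : ℝ := ∑' n : ℕ, (n : ℝ) * (n : ℝ) * a n * t ^ n

variable {a : ℕ → ℝ}

lemma summable_pow (hK : IsKClass a ⊤) (k : ℕ) {t : ℝ} (ht : 0 < t) :
    Summable (fun n : ℕ => (n : ℝ) ^ k * a n * t ^ n) := by
  have := hK.2.2.2.1 (k : ℝ) t ht (by simp)
  simpa [Real.rpow_natCast] using this

lemma summable0 (hK : IsKClass a ⊤) {t : ℝ} (ht : 0 < t) :
    Summable (fun n : ℕ => a n * t ^ n) := by
  simpa using summable_pow hK 0 ht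

lemma summable1 (hK : IsKClass a ⊤) {t : ℝ} (ht : 0 < t) :
    Summable (fun n : ℕ => (n : ℝ) * a n * t ^ n) := by
  simpa using summable_pow hK 1 ht

lemma summable2 (hK : IsKClass a ⊤) {t : ℝ} (ht : 0 < t) :
    Summable (fun n : ℕ => (n : ℝ) * (n : ℝ) * a n * t ^ n) := by
  have := summable_pow hK 2 ht
  apply this.congr
  intro n
  ring

lemma fsum_pos (hK : IsKClass a ⊤) {t : ℝ} (ht : 0 < t) : 0 < fsum a t := by
  have h0 : (0:ℝ) < a 0 * t ^ 0 := by simpa using hK.2.1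
  refine lt_of_lt_of_le h0 ?_
  exact Summable.le_tsum (summable0 hK ht) 0 fun j _ =>
    mul_nonneg (hK.1 j) (pow_nonneg ht.le j)

lemma Bs_pos (hK : IsKClass a ⊤) {t : ℝ} (ht : 0 < t) : 0 < Bs a t := by
  obtain ⟨n₀, hn₀, ha₀⟩ := hK.2.2.1
  have hn₀' : (0:ℝ) < (n₀ : ℝ) := by exact_mod_cast Nat.lt_of_lt_of_le Nat.zero_lt_one hn₀
  have h0 : (0:ℝ) < (n₀ : ℝ) * a n₀ * t ^ n₀ := by positivity
  refine lt_of_lt_of_le h0 ?_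
  exact Summable.le_tsum (summable1 hK ht) n₀ fun j _ =>
    mul_nonneg (mul_nonneg (Nat.cast_nonneg j) (hK.1 j)) (pow_nonneg ht.le j)

lemma mf_eq (a : ℕ → ℝ) (t : ℝ) : mf a t = Bs a t / fsum a t := by
  unfold mf moment Bs
  congr 1
  exact tsum_congr fun n => by rw [Real.rpow_one]

lemma varf_eq (a : ℕ → ℝ) (t : ℝ) :
    varf a t = Cs a t / fsum a t - (Bs a t / fsum a t) ^ 2 := by
  unfold varf moment Cs
  rw [mf_eq]
  congr 2
  refine tsum_congr fun n => ?_
  rw [show ((n:ℝ) ^ (2:ℝ)) = (n:ℝ) * (n:ℝ) by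
    rw [show (2:ℝ) = ((2:ℕ):ℝ) by norm_num, Real.rpow_natCast]; ring]

lemma mf_pos (hK : IsKClass a ⊤) {t : ℝ} (ht : 0 < t) : 0 < mf a t := by
  rw [mf_eq]
  exact div_pos (Bs_pos hK ht) (fsum_pos hK ht)

lemma hasDerivAt_fsum (hK : IsKClass a ⊤) {t : ℝ} (ht : 0 < t) :
    HasDerivAt (fsum a) (Bs a t / t) t := by
  set X := t + 1 with hXdef
  have hX : 0 < X := by linarith
  have hu : Summable (fun n : ℕ => (n : ℝ) * a n * X ^ n / X) :=
    (summable1 hK hX).div_const X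
  have htmem : t ∈ Set.Ioo (0:ℝ) X := ⟨ht, by simp [hXdef]⟩
  have key := hasDerivAt_tsum_of_isPreconnected hu (isOpen_Ioo (a := (0:ℝ)) (b := X))
    (convex_Ioo (0:ℝ) X).isPreconnected
    (g := fun n x => a n * x ^ n) (g' := fun n y => a n * ((n:ℝ) * y ^ (n - 1)))
    (fun n y _ => (hasDerivAt_pow n y).const_mul (a n))
    (fun n y hy => ?_) htmem (summable0 hK ht) htmem
  · have hsum_eq : (∑' n : ℕ, a n * ((n:ℝ) * t ^ (n - 1))) = Bs a t / t := by
      unfold Bs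
      rw [← tsum_div_const]
      refine tsum_congr fun n => ?_
      cases n with
      | zero => simp
      | succ k =>
        rw [Nat.succ_sub_one, pow_succ]
        field_simp
    rw [hsum_eq] at key
    exact key
  · cases n with
    | zero => simp
    | succ k =>
      simp only [Nat.add_sub_cancel]
      rw [Real.norm_eq_abs,
        abs_of_nonneg (by
          have := hK.1 (k+1)
          have := pow_nonneg hy.1.le k
          positivity)]
      have hyX : y ^ k ≤ X ^ k := pow_le_pow_left₀ hy.1.le hy.2.le k
      rw [pow_succ, mul_div_assoc, mul_div_assoc, div_self hX.ne', mul_one]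
      have h1 : (0:ℝ) ≤ ((k:ℝ)+1) * a (k+1) := by
        have := hK.1 (k+1); positivity
      have h2 : ((k:ℝ)+1) * a (k+1) * y ^ k ≤ ((k:ℝ)+1) * a (k+1) * X ^ k :=
        mul_le_mul_of_nonneg_left hyX h1
      push_cast
      nlinarith [h2]

lemma hasDerivAt_Bs (hK : IsKClass a ⊤) {t : ℝ} (ht : 0 < t) :
    HasDerivAt (Bs a) (Cs a t / t) t := by
  set X := t + 1 with hXdef
  have hX : 0 < X := by linarith
  have hu : Summable (fun n : ℕ => (n : ℝ) * (n : ℝ) * a n * X ^ n / X) :=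
    (summable2 hK hX).div_const X
  have htmem : t ∈ Set.Ioo (0:ℝ) X := ⟨ht, by simp [hXdef]⟩
  have key := hasDerivAt_tsum_of_isPreconnected hu (isOpen_Ioo (a := (0:ℝ)) (b := X))
    (convex_Ioo (0:ℝ) X).isPreconnected
    (g := fun (n : ℕ) (x : ℝ) => (n:ℝ) * a n * x ^ n)
    (g' := fun (n : ℕ) (y : ℝ) => (n:ℝ) * a n * ((n:ℝ) * y ^ (n - 1)))
    (fun n y _ => (hasDerivAt_pow n y).const_mul ((n:ℝ) * a n))
    (fun n y hy => ?_) htmem (summable1 hK ht) htmem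
  · have hsum_eq : (∑' n : ℕ, (n:ℝ) * a n * ((n:ℝ) * t ^ (n - 1))) = Cs a t / t := by
      unfold Cs
      rw [← tsum_div_const]
      refine tsum_congr fun n => ?_
      cases n with
      | zero => simp
      | succ k =>
        rw [Nat.succ_sub_one, pow_succ]
        field_simp
    rw [hsum_eq] at key
    exact key
  · cases n with
    | zero => simp
    | succ k =>
      simp only [Nat.add_sub_cancel]
      rw [Real.norm_eq_abs,
        abs_of_nonneg (by
          have := hK.1 (k+1)
          have := pow_nonneg hy.1.le k
          positivity)]
      have hyX : y ^ k ≤ X ^ k := pow_le_pow_left₀ hy.1.le hy.2.le k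
      rw [pow_succ, mul_div_assoc, mul_div_assoc, div_self hX.ne', mul_one]
      have h1 : (0:ℝ) ≤ ((k:ℝ)+1) * (((k:ℝ)+1) * a (k+1)) := by
        have := hK.1 (k+1); positivity
      have h2 : ((k:ℝ)+1) * (((k:ℝ)+1) * a (k+1)) * y ^ k
        ≤ ((k:ℝ)+1) * (((k:ℝ)+1) * a (k+1)) * X ^ k :=
        mul_le_mul_of_nonneg_left hyX h1
      push_cast
      nlinarith [h2]

lemma hasDerivAt_mexp (hK : IsKClass a ⊤) (s : ℝ) :
    HasDerivAt (fun u => mf a (Real.exp u)) (varf a (Real.exp s)) s := by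
  set t := Real.exp s with hts
  have ht : 0 < t := Real.exp_pos s
  have hA := fsum_pos hK ht
  have hder : HasDerivAt (fun x => Bs a x / fsum a x)
      ((Cs a t / t * fsum a t - Bs a t * (Bs a t / t)) / (fsum a t) ^ 2) t :=
    (hasDerivAt_Bs hK ht).div (hasDerivAt_fsum hK ht) hA.ne'
  have hcomp := hder.comp s (Real.hasDerivAt_exp s)
  have hfun : (fun u => mf a (Real.exp u))
      = fun u => Bs a (Real.exp u) / fsum a (Real.exp u) := funext fun u => mf_eq a _
  rw [hfun]
  have hval : (Cs a t / t * fsum a t - Bs a t * (Bs a t / t)) / (fsum a t) ^ 2 * t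
      = varf a t := by
    rw [varf_eq]
    field_simp
  have : HasDerivAt (fun u => Bs a (Real.exp u) / fsum a (Real.exp u))
      ((Cs a t / t * fsum a t - Bs a t * (Bs a t / t)) / (fsum a t) ^ 2 * t) s := by
    exact hcomp
  rwa [hval] at this

lemma freq_le (hK : IsKClass a ⊤) {ε : ℝ} (hε : 0 < ε) :
    ∃ᶠ t in atTop, sigmaf a t / mf a t ≤ ε := by
  by_contra hcon
  have hev : ∀ᶠ t in atTop, ¬ (sigmaf a t / mf a t ≤ ε) := Filter.not_frequently.mp hcon
  obtain ⟨T, hT⟩ := Filter.eventually_atTop.mp hev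
  set S := Real.log (max T 1) with hSdef
  have hmax : (0:ℝ) < max T 1 := lt_of_lt_of_le one_pos (le_max_right T 1)
  have hTs : ∀ s, S ≤ s → ε < sigmaf a (Real.exp s) / mf a (Real.exp s) := by
    intro s hs
    have h1 : T ≤ Real.exp s := by
      calc T ≤ max T 1 := le_max_left T 1
        _ = Real.exp S := (Real.exp_log hmax).symm
        _ ≤ Real.exp s := Real.exp_le_exp.mpr hs
    exact not_le.mp (hT _ h1)
  set g : ℝ → ℝ := fun s => -(mf a (Real.exp s))⁻¹ with hgdef
  have hg : ∀ s, HasDerivAt g (varf a (Real.exp s) / (mf a (Real.exp s)) ^ 2) s := by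
    intro s
    have hm := mf_pos hK (Real.exp_pos s)
    have h1 := ((hasDerivAt_mexp hK s).inv hm.ne').neg
    exact (by simpa [neg_div] using h1 : HasDerivAt (-(fun u => mf a (Real.exp u))⁻¹) (varf a (Real.exp s) / (mf a (Real.exp s)) ^ 2) s)
  have hbound : ∀ x ∈ interior (Set.Ici S), ε ^ 2 ≤ deriv g x := by
    intro x hx
    rw [interior_Ici] at hx
    have hm := mf_pos hK (Real.exp_pos x)
    have hεm : 0 < ε * mf a (Real.exp x) := mul_pos hε hm
    have hσ : ε * mf a (Real.exp x) < Real.sqrt (varf a (Real.exp x)) := by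
      have := hTs x (le_of_lt hx)
      rw [lt_div_iff₀ hm] at this
      simpa [sigmaf, mul_comm] using this
    have hvpos : 0 < varf a (Real.exp x) :=
      Real.sqrt_pos.mp (lt_trans hεm hσ)
    have hsq : (ε * mf a (Real.exp x)) ^ 2 < varf a (Real.exp x) := by
      have h2 := pow_lt_pow_left₀ hσ hεm.le (n := 2) two_ne_zero
      rwa [Real.sq_sqrt hvpos.le] at h2
    rw [(hg x).deriv, le_div_iff₀ (pow_pos hm 2)]
    nlinarith [hsq]
  have hcont : ContinuousOn g (Set.Ici S) :=
    fun x _ => (hg x).continuousAt.continuousWithinAt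
  have hdiff : DifferentiableOn ℝ g (interior (Set.Ici S)) :=
    fun x _ => (hg x).differentiableAt.differentiableWithinAt
  have hMVT := (convex_Ici S).mul_sub_le_image_sub_of_le_deriv hcont hdiff hbound
  set mS := mf a (Real.exp S) with hmSdef
  have hmS : 0 < mS := mf_pos hK (Real.exp_pos S)
  set y := S + (mS⁻¹ + 1) / ε ^ 2 with hydef
  have hSy : S ≤ y := by
    have h : 0 ≤ (mS⁻¹ + 1) / ε ^ 2 := by positivity
    rw [hydef]
    linarith
  have hkey := hMVT S Set.self_mem_Ici y hSy hSy
  have hyval : ε ^ 2 * (y - S) = mS⁻¹ + 1 := by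
    rw [hydef, add_sub_cancel_left]
    field_simp
  have hmy : 0 < mf a (Real.exp y) := mf_pos hK (Real.exp_pos y)
  have hmyi : 0 < (mf a (Real.exp y))⁻¹ := inv_pos.mpr hmy
  have hgval : g y - g S = -(mf a (Real.exp y))⁻¹ + mS⁻¹ := by
    simp only [hgdef, hmSdef]
    ring
  rw [hyval, hgval] at hkey
  linarith

end WeakClanAux

/-- every entire power series in `K` is a weak clan:
`liminf_{t→∞} σ_f(t)/m_f(t) = 0`. -/
theorem entire_weak_clan (a : ℕ → ℝ) (hK : IsKClass a ⊤) :
    Filter.liminf (fun t => sigmaf a t / mf a t) atTop = 0 := by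
  have hnonneg : ∀ᶠ t in atTop, 0 ≤ sigmaf a t / mf a t := by
    refine Filter.eventually_atTop.mpr ⟨1, fun t ht => ?_⟩
    exact div_nonneg (Real.sqrt_nonneg _) (WeakClanAux.mf_pos hK (by linarith)).le
  have hbdd : Filter.IsBoundedUnder (· ≥ ·) atTop (fun t => sigmaf a t / mf a t) :=
    ⟨0, by simpa only [Filter.eventually_map] using hnonneg⟩
  have hle : ∀ ε : ℝ, 0 < ε → Filter.liminf (fun t => sigmaf a t / mf a t) atTop ≤ ε :=
    fun ε hε => Filter.liminf_le_of_frequently_le (WeakClanAux.freq_le hK hε) hbdd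
  have hco : Filter.IsCoboundedUnder (· ≥ ·) atTop (fun t => sigmaf a t / mf a t) :=
    Filter.IsCoboundedUnder.of_frequently_le (WeakClanAux.freq_le hK one_pos)
  have h0 : 0 ≤ Filter.liminf (fun t => sigmaf a t / mf a t) atTop :=
    Filter.le_liminf_of_le hco hnonneg
  refine le_antisymm ?_ h0
  by_contra h
  push_neg at h
  have := hle (Filter.liminf (fun t => sigmaf a t / mf a t) atTop / 2) (by linarith)
  linarith
end
end

section
/- Let f be a power series in the class K with radius of convergence R. (i) If R = ∞, then f is a clan if and only if lim_{t→∞} m_f(t + t/m_f(t))/m_f(t) = 1. (ii) If R < ∞, then f is a clan if and only if lim_{t↑R} (R − t)·m_f(t) = ∞ and (with t + t/m_f(t) < R for t close enough to R, so the expression is defined) lim_{t↑R} m_f(t + t/m_f(t))/m_f(t) = 1. -/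
open Filter MeasureTheory Topology Real
open scoped ENNReal

noncomputable section

/-! ### auxiliary development -/

/-- power sums with natural exponents -/
def S (a : ℕ → ℝ) (k : ℕ) (t : ℝ) : ℝ := ∑' n : ℕ, (n : ℝ) ^ k * a n * t ^ n

/-- membership in the domain of convergence -/
def Dom (R : ℝ≥0∞) (t : ℝ) : Prop := 0 < t ∧ ENNReal.ofReal t < R

section basic

variable {a : ℕ → ℝ} {R : ℝ≥0∞} (hK : IsKClass a R)
include hK

lemma summableS (k : ℕ) {t : ℝ} (ht : Dom R t) :
    Summable (fun n : ℕ => (n : ℝ) ^ k * a n * t ^ n) := by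
  have := hK.2.2.2.1 k t ht.1 ht.2
  simpa [Real.rpow_natCast] using this

omit hK in
lemma dom_mono {t s : ℝ} (hs : Dom R s) (h0 : 0 < t) (hts : t ≤ s) : Dom R t :=
  ⟨h0, lt_of_le_of_lt (ENNReal.ofReal_le_ofReal hts) hs.2⟩

lemma S_nonneg (k : ℕ) {t : ℝ} (ht : 0 < t) : 0 ≤ S a k t :=
  tsum_nonneg fun n => by have h1 := hK.1 n; have h2 := ht.le; positivity

lemma S0_pos {t : ℝ} (ht : Dom R t) : 0 < S a 0 t := by
  have h := (summableS hK 0 ht)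
  have hle : ((0:ℕ):ℝ) ^ (0:ℕ) * a 0 * t ^ (0:ℕ) ≤ S a 0 t :=
    Summable.le_tsum h 0 (fun n _ => by have := hK.1 n; have := ht.1.le; positivity)
  have h0 := hK.2.1
  simp at hle
  nlinarith

lemma S1_pos {t : ℝ} (ht : Dom R t) : 0 < S a 1 t := by
  obtain ⟨k, hk1, hk⟩ := hK.2.2.1
  have h := (summableS hK 1 ht)
  have hle : (k : ℝ) ^ 1 * a k * t ^ k ≤ S a 1 t :=
    Summable.le_tsum h k (fun n _ => by have := hK.1 n; have := ht.1.le; positivity)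
  have : (0:ℝ) < (k : ℝ) ^ 1 * a k * t ^ k := by
    have : (0:ℝ) < (k:ℝ) := by exact_mod_cast hk1
    have := ht.1
    positivity
  linarith

omit hK in
lemma fsum_eq_S0 (t : ℝ) : fsum a t = S a 0 t := by
  refine tsum_congr fun n => by simp

omit hK in
lemma mf_eq (t : ℝ) : mf a t = S a 1 t / S a 0 t := by
  rw [mf, moment, fsum_eq_S0]
  congr 1
  exact tsum_congr fun n => by rw [Real.rpow_one]; norm_num

omit hK in
lemma moment2_eq (t : ℝ) : moment a 2 t = S a 2 t / S a 0 t := by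
  rw [moment, fsum_eq_S0]
  congr 1
  refine tsum_congr fun n => ?_
  have : ((n:ℝ)) ^ (2:ℝ) = (n:ℝ) ^ (2:ℕ) := by
    rw [← Real.rpow_natCast (n:ℝ) 2]; norm_num
  rw [this]

omit hK in
lemma varf_eq (t : ℝ) : varf a t = S a 2 t / S a 0 t - (S a 1 t / S a 0 t) ^ 2 := by
  rw [varf, moment2_eq, mf_eq]

lemma mf_pos {t : ℝ} (ht : Dom R t) : 0 < mf a t := by
  rw [mf_eq]; exact div_pos (S1_pos hK ht) (S0_pos hK ht)

end basic

section deriv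

variable {a : ℕ → ℝ} {R : ℝ≥0∞} (hK : IsKClass a R)
include hK

omit hK in
lemma exists_upper {t : ℝ} (ht : Dom R t) : ∃ r, t < r ∧ Dom R r := by
  obtain ⟨c, hc1, hc2⟩ := exists_between ht.2
  have hct : c ≠ ⊤ := (hc2.trans_le le_top).ne
  refine ⟨c.toReal, ?_, ?_, ?_⟩
  · have := (ENNReal.toReal_lt_toReal (by simp) hct).mpr hc1
    simpa [ENNReal.toReal_ofReal ht.1.le] using this
  · have : (0:ℝ) < ENNReal.toReal (ENNReal.ofReal t) := by
      simpa [ENNReal.toReal_ofReal ht.1.le] using ht.1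
    have h2 := (ENNReal.toReal_lt_toReal (by simp) hct).mpr hc1
    linarith
  · rwa [ENNReal.ofReal_toReal hct]

lemma hasDerivAt_S (k : ℕ) {t : ℝ} (ht : Dom R t) :
    HasDerivAt (S a k) (S a (k + 1) t / t) t := by
  obtain ⟨r, htr, hr⟩ := exists_upper ht
  have hr0 : 0 < r := hr.1
  have hu : Summable (fun n : ℕ => (n : ℝ) ^ (k+1) * a n * r ^ n / r) :=
    (summableS hK (k+1) hr).div_const r
  have key := hasDerivAt_tsum_of_isPreconnected hu (isOpen_Ioo (a := (0:ℝ)) (b := r))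
    (isPreconnected_Ioo)
    (g := fun (n : ℕ) (y : ℝ) => (n : ℝ) ^ k * a n * y ^ n)
    (g' := fun (n : ℕ) (y : ℝ) => (n : ℝ) ^ k * a n * ((n:ℝ) * y ^ (n - 1)))
    (fun n y _ => (hasDerivAt_pow n y).const_mul ((n : ℝ) ^ k * a n))
    (fun n y hy => ?_) (y₀ := t) ⟨ht.1, htr⟩ (summableS hK k ht) ⟨ht.1, htr⟩
  · have e : ∀ n : ℕ, (n : ℝ) ^ k * a n * ((n:ℝ) * t ^ (n - 1))
        = ((n : ℝ) ^ (k+1) * a n * t ^ n) / t := by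
      intro n
      cases n with
      | zero => simp
      | succ m =>
        have ht0 : t ≠ 0 := ht.1.ne'
        field_simp
        simp only [Nat.add_sub_cancel]
        ring
    rw [tsum_congr e, tsum_div_const] at key
    exact key
  · have hy0 : 0 ≤ y := hy.1.le
    have hyr : y ≤ r := hy.2.le
    have han := hK.1 n
    rw [Real.norm_eq_abs, abs_of_nonneg (by positivity)]
    cases n with
    | zero => simp [hr0.le]
    | succ m =>
      have h1 : r ^ (m + 1) / r = r ^ m := by
        rw [pow_succ, mul_div_assoc, div_self hr0.ne', mul_one]
      have h2 : y ^ (m + 1 - 1) ≤ r ^ m := by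
        simpa using pow_le_pow_left₀ hy0 hyr m
      show ((m+1 : ℕ) : ℝ) ^ k * a (m+1) * (((m+1:ℕ):ℝ) * y ^ (m + 1 - 1))
          ≤ ((m+1 : ℕ) : ℝ) ^ (k+1) * a (m+1) * r ^ (m+1) / r
      rw [mul_div_assoc, h1]
      calc ((m+1 : ℕ) : ℝ) ^ k * a (m+1) * (((m+1:ℕ):ℝ) * y ^ (m + 1 - 1))
          ≤ ((m+1 : ℕ) : ℝ) ^ k * a (m+1) * (((m+1:ℕ):ℝ) * r ^ m) := by
            have han1 := hK.1 (m+1)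
            have h9 : (0:ℝ) ≤ ((m+1:ℕ):ℝ) := by positivity
            gcongr
        _ = ((m+1 : ℕ) : ℝ) ^ (k+1) * a (m+1) * r ^ m := by ring
  
lemma hasDerivAt_mf {t : ℝ} (ht : Dom R t) :
    HasDerivAt (mf a) (varf a t / t) t := by
  have h1 := hasDerivAt_S hK 1 ht
  have h0 := hasDerivAt_S hK 0 ht
  have hS0 : S a 0 t ≠ 0 := (S0_pos hK ht).ne'
  have hd := h1.div h0 hS0
  have : mf a = fun u => S a 1 u / S a 0 u := funext fun u => mf_eq u
  rw [this]
  refine hd.congr_deriv ?_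
  rw [varf_eq]
  have ht0 : t ≠ 0 := ht.1.ne'
  field_simp

lemma sq_expand {t : ℝ} (ht : Dom R t) (c : ℝ) :
    ∑' n : ℕ, ((n:ℝ) - c) ^ 2 * (a n * t ^ n)
      = S a 2 t - 2 * c * S a 1 t + c ^ 2 * S a 0 t := by
  have h2 := summableS hK 2 ht
  have h1 := summableS hK 1 ht
  have h0 := summableS hK 0 ht
  have e : ∀ n : ℕ, ((n:ℝ) - c) ^ 2 * (a n * t ^ n)
      = ((n:ℝ) ^ 2 * a n * t ^ n - 2 * c * ((n:ℝ) ^ 1 * a n * t ^ n))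
        + c ^ 2 * ((n:ℝ) ^ 0 * a n * t ^ n) := by intro n; ring
  rw [tsum_congr e, Summable.tsum_add (h2.sub ((h1.mul_left _))) ((h0.mul_left _)),
    Summable.tsum_sub h2 (h1.mul_left _), tsum_mul_left, tsum_mul_left]
  rfl

lemma cube_expand {t : ℝ} (ht : Dom R t) (c : ℝ) :
    ∑' n : ℕ, (n:ℝ) * ((n:ℝ) - c) ^ 2 * (a n * t ^ n)
      = S a 3 t - 2 * c * S a 2 t + c ^ 2 * S a 1 t := by
  have h3 := summableS hK 3 ht
  have h2 := summableS hK 2 ht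
  have h1 := summableS hK 1 ht
  have e : ∀ n : ℕ, (n:ℝ) * ((n:ℝ) - c) ^ 2 * (a n * t ^ n)
      = ((n:ℝ) ^ 3 * a n * t ^ n - 2 * c * ((n:ℝ) ^ 2 * a n * t ^ n))
        + c ^ 2 * ((n:ℝ) ^ 1 * a n * t ^ n) := by intro n; ring
  rw [tsum_congr e, Summable.tsum_add (h3.sub ((h2.mul_left _))) ((h1.mul_left _)),
    Summable.tsum_sub h3 (h2.mul_left _), tsum_mul_left, tsum_mul_left]
  rfl

lemma varf_eq_sum {t : ℝ} (ht : Dom R t) :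
    varf a t = (∑' n : ℕ, ((n:ℝ) - mf a t) ^ 2 * (a n * t ^ n)) / S a 0 t := by
  rw [sq_expand hK ht, varf_eq, mf_eq]
  have hS0 : S a 0 t ≠ 0 := (S0_pos hK ht).ne'
  field_simp
  ring

lemma varf_nonneg {t : ℝ} (ht : Dom R t) : 0 ≤ varf a t := by
  rw [varf_eq_sum hK ht]
  have h1 : 0 ≤ ∑' n : ℕ, ((n:ℝ) - mf a t) ^ 2 * (a n * t ^ n) :=
    tsum_nonneg fun n => by have := hK.1 n; have := ht.1.le; positivity
  exact div_nonneg h1 (S0_pos hK ht).le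

lemma varf_lower {t : ℝ} (ht : Dom R t) :
    mf a t ^ 2 * a 0 / S a 0 t ≤ varf a t := by
  rw [varf_eq_sum hK ht]
  have hsum : Summable (fun n : ℕ => ((n:ℝ) - mf a t) ^ 2 * (a n * t ^ n)) := by
    have h2 := summableS hK 2 ht
    have h1 := summableS hK 1 ht
    have h0 := summableS hK 0 ht
    have e : ∀ n : ℕ, ((n:ℝ) - mf a t) ^ 2 * (a n * t ^ n)
        = ((n:ℝ) ^ 2 * a n * t ^ n - 2 * mf a t * ((n:ℝ) ^ 1 * a n * t ^ n))
          + mf a t ^ 2 * ((n:ℝ) ^ 0 * a n * t ^ n) := by intro n; ring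
    exact Summable.congr (((h2.sub (h1.mul_left _)).add (h0.mul_left _))) fun n => (e n).symm
  have hle : ((0:ℝ) - mf a t) ^ 2 * (a 0 * t ^ 0) ≤ ∑' n : ℕ, ((n:ℝ) - mf a t) ^ 2 * (a n * t ^ n) := by
    have := Summable.le_tsum hsum 0 (fun n _ => by have := hK.1 n; have := ht.1.le; positivity)
    simpa using this
  have : mf a t ^ 2 * a 0 ≤ ∑' n : ℕ, ((n:ℝ) - mf a t) ^ 2 * (a n * t ^ n) := by
    simp at hle; nlinarith [hle]
  have hS0pos := S0_pos hK ht
  gcongr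

lemma mu3_ineq {t : ℝ} (ht : Dom R t) :
    ∃ d, HasDerivAt (varf a) d t ∧ 0 ≤ t * d + mf a t * varf a t := by
  have h0 := hasDerivAt_S hK 0 ht
  have h1 := hasDerivAt_S hK 1 ht
  have h2 := hasDerivAt_S hK 2 ht
  have hS0 : S a 0 t ≠ 0 := (S0_pos hK ht).ne'
  have hd := (h2.div h0 hS0).sub ((h1.div h0 hS0).pow 2)
  have heq : varf a = fun u => S a 2 u / S a 0 u - (S a 1 u / S a 0 u) ^ 2 :=
    funext fun u => varf_eq u
  refine ⟨_, hd.congr_of_eventuallyEq (Filter.Eventually.of_forall fun u => varf_eq u), ?_⟩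
  have hnn : 0 ≤ ∑' n : ℕ, (n:ℝ) * ((n:ℝ) - mf a t) ^ 2 * (a n * t ^ n) :=
    tsum_nonneg fun n => by have := hK.1 n; have := ht.1.le; positivity
  rw [cube_expand hK ht] at hnn
  have hm : mf a t = S a 1 t / S a 0 t := mf_eq t
  have hv : varf a t = S a 2 t / S a 0 t - (S a 1 t / S a 0 t) ^ 2 := varf_eq t
  have ht0 : t ≠ 0 := ht.1.ne'
  have hS0pos := S0_pos hK ht
  have key : t * ((S a (2+1) t / t * S a 0 t - S a 2 t * (S a (0+1) t / t)) / S a 0 t ^ 2 -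
        ((2:ℕ):ℝ) * (S a 1 t / S a 0 t) ^ (2 - 1) *
          ((S a (1+1) t / t * S a 0 t - S a 1 t * (S a (0+1) t / t)) / S a 0 t ^ 2)) +
        S a 1 t / S a 0 t * (S a 2 t / S a 0 t - (S a 1 t / S a 0 t) ^ 2)
      = (S a 3 t - 2 * (S a 1 t / S a 0 t) * S a 2 t + (S a 1 t / S a 0 t) ^ 2 * S a 1 t)
        / S a 0 t := by
    norm_num
    field_simp
    ring
  rw [hm, hv, Pi.div_apply, key]
  rw [hm] at hnn
  apply div_nonneg _ hS0pos.le
  linarith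

end deriv

section steps

variable {a : ℕ → ℝ} {R : ℝ≥0∞} (hK : IsKClass a R)
include hK

omit hK in
lemma mono_of_deriv {g g' : ℝ → ℝ} {x y : ℝ} (hxy : x ≤ y)
    (hd : ∀ u ∈ Set.Icc x y, HasDerivAt g (g' u) u)
    (h0 : ∀ u ∈ Set.Icc x y, 0 ≤ g' u) : g x ≤ g y := by
  have hmono := monotoneOn_of_deriv_nonneg (convex_Icc x y)
    (fun u hu => (hd u hu).continuousAt.continuousWithinAt)
    (fun u hu => ((hd u (interior_subset hu)).differentiableAt).differentiableWithinAt)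
    (fun u hu => by rw [(hd u (interior_subset hu)).deriv]; exact h0 u (interior_subset hu))
  exact hmono (Set.left_mem_Icc.mpr hxy) (Set.right_mem_Icc.mpr hxy) hxy

omit hK in
lemma dom_of_mem_Icc {x y u : ℝ} (hx : 0 < x) (hy : Dom R y) (hu : u ∈ Set.Icc x y) :
    Dom R u := dom_mono hy (hx.trans_le hu.1) hu.2

lemma mf_mono {x y : ℝ} (hx : Dom R x) (hy : Dom R y) (hxy : x ≤ y) :
    mf a x ≤ mf a y := by
  refine mono_of_deriv (g' := fun u => varf a u / u) hxy
    (fun u hu => hasDerivAt_mf hK (dom_of_mem_Icc hx.1 hy hu))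
    (fun u hu => ?_)
  have hd := dom_of_mem_Icc hx.1 hy hu
  exact div_nonneg (varf_nonneg hK hd) hd.1.le

lemma forward_step {ε x y : ℝ} (hε : 0 < ε) (hx : Dom R x) (hy : Dom R y) (hxy : x ≤ y)
    (hv : ∀ u ∈ Set.Icc x y, varf a u ≤ ε * mf a u ^ 2) :
    (mf a x)⁻¹ ≤ (mf a y)⁻¹ + ε * (Real.log y - Real.log x) := by
  have key : (fun u => (mf a u)⁻¹ + ε * Real.log u) x
      ≤ (fun u => (mf a u)⁻¹ + ε * Real.log u) y := by
    refine mono_of_deriv (g := fun u => (mf a u)⁻¹ + ε * Real.log u)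
      (g' := fun u => -(varf a u / u) / (mf a u) ^ 2 + ε * u⁻¹) hxy
      (fun u hu => ?_) (fun u hu => ?_)
    · have hd := dom_of_mem_Icc hx.1 hy hu
      exact ((hasDerivAt_mf hK hd).inv (mf_pos hK hd).ne').add
        ((Real.hasDerivAt_log hd.1.ne').const_mul ε)
    · have hd := dom_of_mem_Icc hx.1 hy hu
      have hu0 : 0 < u := hd.1
      have hm : 0 < mf a u := mf_pos hK hd
      beta_reduce
      have e : -(varf a u / u) / (mf a u) ^ 2 + ε * u⁻¹
          = (ε * mf a u ^ 2 - varf a u) / (u * mf a u ^ 2) := by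
        field_simp
        ring
      rw [e]
      exact div_nonneg (by linarith [hv u hu]) (by positivity)
  simp only at key
  linarith

lemma backward_step {x y : ℝ} (hx : Dom R x) (hy : Dom R y) (hxy : x ≤ y) :
    varf a x * (1 - (x / y) ^ (mf a y)) / mf a y ≤ mf a y - mf a x := by
  set M := mf a y with hM
  have hMpos : 0 < M := mf_pos hK hy
  have hx0 : 0 < x := hx.1
  -- step (a): k(u) = varf u * u ^ M is monotone on [x, y]
  have hkd : ∀ u ∈ Set.Icc x y, ∃ d, HasDerivAt (fun w => varf a w * w ^ M) d u ∧ 0 ≤ d := by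
    intro u hu
    have hd := dom_of_mem_Icc hx0 hy hu
    have hu0 : 0 < u := hd.1
    obtain ⟨d, hder, hineq⟩ := mu3_ineq hK hd
    refine ⟨d * u ^ M + varf a u * (M * u ^ (M - 1)), hder.mul
      (Real.hasDerivAt_rpow_const (Or.inl hu0.ne')), ?_⟩
    have hpow : u ^ M = u ^ (M - 1) * u := by
      rw [← Real.rpow_add_one hu0.ne' (M - 1)]
      norm_num
    have hMu : mf a u ≤ M := mf_mono hK hd hy hu.2
    have hvu : 0 ≤ varf a u := varf_nonneg hK hd
    have e : d * u ^ M + varf a u * (M * u ^ (M - 1))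
        = u ^ (M - 1) * (u * d + M * varf a u) := by rw [hpow]; ring
    rw [e]
    apply mul_nonneg (Real.rpow_nonneg hu0.le _)
    nlinarith [hineq]
  choose kd hkd1 hkd2 using hkd
  have hkmono : ∀ u ∈ Set.Icc x y, varf a x * x ^ M ≤ varf a u * u ^ M := by
    intro u hu
    refine mono_of_deriv (g := fun w => varf a w * w ^ M)
      (g' := fun w => if hw : w ∈ Set.Icc x y then kd w hw else 0) hu.1
      (fun w hw => ?_) (fun w hw => ?_)
    · have hw' : w ∈ Set.Icc x y := ⟨hw.1, hw.2.trans hu.2⟩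
      beta_reduce
      rw [dif_pos hw']
      exact hkd1 w hw'
    · have hw' : w ∈ Set.Icc x y := ⟨hw.1, hw.2.trans hu.2⟩
      beta_reduce
      rw [dif_pos hw']
      exact hkd2 w hw'
  -- step (b): h(u) = mf u + C * u^(-M) is monotone, C = varf x * x^M / M
  set C := varf a x * x ^ M / M with hC
  have hhx : mf a x + C * x ^ (-M) ≤ mf a y + C * y ^ (-M) := by
    refine mono_of_deriv (g := fun u => mf a u + C * u ^ (-M))
      (g' := fun u => varf a u / u + C * (-M * u ^ (-M - 1))) hxy
      (fun u hu => ?_) (fun u hu => ?_)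
    · have hd := dom_of_mem_Icc hx0 hy hu
      exact (hasDerivAt_mf hK hd).add
        ((Real.hasDerivAt_rpow_const (Or.inl hd.1.ne')).const_mul C)
    · have hd := dom_of_mem_Icc hx0 hy hu
      have hu0 : 0 < u := hd.1
      beta_reduce
      have h2 : u ^ M * u ^ (-M - 1) = u⁻¹ := by
        rw [← Real.rpow_add hu0]
        have hMe : M + (-M - 1) = -1 := by ring
        rw [hMe]
        exact Real.rpow_neg_one u
      have e : varf a u / u + C * (-M * u ^ (-M - 1))
          = (varf a u * u ^ M - varf a x * x ^ M) * u ^ (-M - 1) := by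
        rw [hC, div_eq_mul_inv, ← h2]
        field_simp
        ring
      rw [e]
      exact mul_nonneg (by linarith [hkmono u hu]) (Real.rpow_nonneg hu0.le _)
  have hy0 : 0 < y := hy.1
  have hxM : (0:ℝ) < x ^ M := Real.rpow_pos_of_pos hx0 _
  have hyM : (0:ℝ) < y ^ M := Real.rpow_pos_of_pos hy0 _
  have e1 : C * x ^ (-M) = varf a x / M := by
    rw [hC, Real.rpow_neg hx0.le]
    field_simp
  have e2 : C * y ^ (-M) = varf a x * (x / y) ^ M / M := by
    rw [hC, Real.rpow_neg hy0.le, Real.div_rpow hx0.le hy0.le]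
    field_simp [hMpos.ne', hyM.ne']
  rw [e1, e2] at hhx
  have e3 : varf a x * (1 - (x / y) ^ M) / M
      = varf a x / M - varf a x * (x / y) ^ M / M := by ring
  rw [e3]
  linarith

end steps

section ptmain

variable {a : ℕ → ℝ} {R : ℝ≥0∞} (hK : IsKClass a R)
include hK

lemma s_gt {t : ℝ} (ht : Dom R t) : t < t + t / mf a t := by
  have h1 := div_pos ht.1 (mf_pos hK ht)
  linarith

lemma forward_pt {ε t : ℝ} (hε : 0 < ε) (hε1 : ε < 1) (ht : Dom R t)
    (hs : Dom R (t + t / mf a t))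
    (hv : ∀ u ∈ Set.Icc t (t + t / mf a t), varf a u ≤ ε * mf a u ^ 2) :
    1 ≤ mf a (t + t / mf a t) / mf a t ∧ mf a (t + t / mf a t) / mf a t ≤ (1 - ε)⁻¹ := by
  set s := t + t / mf a t with hs_def
  have hm : 0 < mf a t := mf_pos hK ht
  have hts : t ≤ s := (s_gt hK ht).le
  have hs0 : 0 < s := ht.1.trans_le hts
  have hM : 0 < mf a s := mf_pos hK hs
  have hmono := mf_mono hK ht hs hts
  have h1ε : 0 < 1 - ε := by linarith
  constructor
  · rw [le_div_iff₀ hm]; linarith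
  · have hstep := forward_step hK hε ht hs hts hv
    have hlog : Real.log s - Real.log t ≤ 1 / mf a t := by
      have h1 : Real.log (s / t) = Real.log s - Real.log t :=
        Real.log_div hs0.ne' ht.1.ne'
      have h2 : Real.log (s / t) ≤ s / t - 1 :=
        Real.log_le_sub_one_of_pos (div_pos hs0 ht.1)
      have h3 : s / t - 1 = 1 / mf a t := by
        rw [hs_def, add_div, div_self ht.1.ne', div_div, mul_comm, ← div_div,
          div_self ht.1.ne']
        ring
      linarith
    have h4 : (mf a t)⁻¹ ≤ (mf a s)⁻¹ + ε * (1 / mf a t) := by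
      have := mul_le_mul_of_nonneg_left hlog hε.le
      linarith
    have h5 : mf a s * (1 - ε) ≤ mf a t := by
      rw [inv_eq_one_div, inv_eq_one_div] at h4
      have e1 : (1 - ε) / mf a t ≤ 1 / mf a s := by
        have e0 : (1 - ε) / mf a t = 1 / mf a t - ε * (1 / mf a t) := by ring
        linarith [e0]
      rw [div_le_div_iff₀ hm hM] at e1
      linarith
    rw [div_le_iff₀ hm]
    have h6 := mul_le_mul_of_nonneg_left h5 (inv_pos.mpr h1ε).le
    have h7 : (1 - ε)⁻¹ * (mf a s * (1 - ε)) = mf a s := by field_simp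
    rw [h7] at h6
    exact h6

lemma backward_pt {t0 t : ℝ} (ht0 : Dom R t0) (ht : Dom R t) (h0t : t0 ≤ t)
    (hs : Dom R (t + t / mf a t)) :
    varf a t / mf a t ^ 2
      ≤ (mf a (t + t / mf a t) / mf a t) * (mf a (t + t / mf a t) / mf a t - 1)
        / (1 - Real.exp (-(mf a t0 / (mf a t0 + 1)))) := by
  set s := t + t / mf a t with hs_def
  have hm : 0 < mf a t := mf_pos hK ht
  have hm0 : 0 < mf a t0 := mf_pos hK ht0
  have hts : t ≤ s := (s_gt hK ht).le
  have hM : 0 < mf a s := mf_pos hK hs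
  have hmM : mf a t ≤ mf a s := mf_mono hK ht hs hts
  have hm0m : mf a t0 ≤ mf a t := mf_mono hK ht0 ht h0t
  have ht0' : 0 < t := ht.1
  have hs0 : 0 < s := ht0'.trans_le hts
  set c1 := 1 - Real.exp (-(mf a t0 / (mf a t0 + 1))) with hc1_def
  have hc1 : 0 < c1 := by
    have : Real.exp (-(mf a t0 / (mf a t0 + 1))) < 1 := by
      rw [Real.exp_lt_one_iff]
      have : 0 < mf a t0 / (mf a t0 + 1) := by positivity
      linarith
    simp only [hc1_def]
    linarith
  -- bound the power (t/s)^(mf a s)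
  have hts1 : t / s < 1 := (div_lt_one hs0).mpr (s_gt hK ht)
  have hts0 : 0 < t / s := by positivity
  have hq1 : (t / s) ^ (mf a s) ≤ (t / s) ^ (mf a t) :=
    Real.rpow_le_rpow_of_exponent_ge hts0 hts1.le hmM
  have hq2 : (t / s) ^ (mf a t) = Real.exp (mf a t * Real.log (t / s)) := by
    rw [Real.rpow_def_of_pos hts0, mul_comm]
  have hlog : Real.log (t / s) ≤ t / s - 1 := Real.log_le_sub_one_of_pos hts0
  have hfrac : t / s - 1 = -(1 / (mf a t + 1)) := by
    rw [hs_def]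
    field_simp
    ring
  have hexp : mf a t * Real.log (t / s) ≤ -(mf a t0 / (mf a t0 + 1)) := by
    have e1 : mf a t * Real.log (t / s) ≤ mf a t * (t / s - 1) :=
      mul_le_mul_of_nonneg_left hlog hm.le
    have e2 : mf a t * (t / s - 1) = -(mf a t / (mf a t + 1)) := by
      rw [hfrac]; ring
    have e3 : mf a t0 / (mf a t0 + 1) ≤ mf a t / (mf a t + 1) := by
      rw [div_le_div_iff₀ (by positivity) (by positivity)]
      nlinarith
    have e4 : -(mf a t / (mf a t + 1)) ≤ -(mf a t0 / (mf a t0 + 1)) := by linarith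
    linarith [e1, e2]
  have hq : (t / s) ^ (mf a s) ≤ Real.exp (-(mf a t0 / (mf a t0 + 1))) := by
    calc (t / s) ^ (mf a s) ≤ (t / s) ^ (mf a t) := hq1
      _ = Real.exp (mf a t * Real.log (t / s)) := hq2
      _ ≤ Real.exp (-(mf a t0 / (mf a t0 + 1))) := Real.exp_le_exp.mpr hexp
  have hbs := backward_step hK ht hs hts
  have hvt : 0 ≤ varf a t := varf_nonneg hK ht
  have key0 : varf a t * c1 / mf a s ≤ mf a s - mf a t := by
    refine le_trans ?_ hbs
    have : varf a t * c1 ≤ varf a t * (1 - (t / s) ^ (mf a s)) := by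
      apply mul_le_mul_of_nonneg_left _ hvt
      simp only [hc1_def]
      linarith [hq]
    exact (div_le_div_iff_of_pos_right hM).mpr this
  have key : varf a t * c1 ≤ (mf a s - mf a t) * mf a s := by
    have := (div_le_iff₀ hM).mp key0
    linarith
  rw [div_le_div_iff₀ (by positivity) hc1]
  have erhs : mf a s / mf a t * (mf a s / mf a t - 1) * mf a t ^ 2
      = (mf a s - mf a t) * mf a s := by
    field_simp
  rw [erhs]
  exact key

end ptmain


section filters

variable {a : ℕ → ℝ} {R : ℝ≥0∞} (hK : IsKClass a R)
include hK

omit hK in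
lemma dom_lt_toReal (hRtop : R ≠ ⊤) {u : ℝ} (hu : Dom R u) : u < R.toReal := by
  have h := (ENNReal.toReal_lt_toReal ENNReal.ofReal_ne_top hRtop).mpr hu.2
  rwa [ENNReal.toReal_ofReal hu.1.le] at h

omit hK in
lemma dom_of_lt_toReal (hRtop : R ≠ ⊤) {u : ℝ} (h0 : 0 < u) (h : u < R.toReal) : Dom R u := by
  refine ⟨h0, ?_⟩
  rw [← ENNReal.ofReal_toReal hRtop]
  exact (ENNReal.ofReal_lt_ofReal_iff (h0.trans h)).mpr h

omit hK in
lemma exists_dom (hR : 0 < R) : ∃ t0, Dom R t0 := by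
  by_cases hRtop : R = ⊤
  · exact ⟨1, one_pos, by simp [hRtop]⟩
  · have hRt : 0 < R.toReal := ENNReal.toReal_pos hR.ne' hRtop
    exact ⟨R.toReal / 2, by linarith, (dom_of_lt_toReal hRtop (by linarith) (by linarith)).2⟩

omit hK in
lemma ev_ge_dom {x : ℝ} (hx : Dom R x) : ∀ᶠ t in nhdsLT R, x ≤ t ∧ Dom R t := by
  by_cases hRtop : R = ⊤
  · rw [_root_.nhdsLT, if_pos hRtop]
    filter_upwards [eventually_ge_atTop x] with t ht
    exact ⟨ht, hx.1.trans_le ht, by simp [hRtop]⟩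
  · rw [_root_.nhdsLT, if_neg hRtop]
    have hxR : x < R.toReal := dom_lt_toReal hRtop hx
    filter_upwards [Ioo_mem_nhdsLT_of_mem ⟨hxR, le_refl _⟩] with t ht
    exact ⟨ht.1.le, dom_of_lt_toReal hRtop (hx.1.trans ht.1) ht.2⟩

lemma var_of_dist {u ε : ℝ} (hd : Dom R u) (hε : 0 < ε)
    (h : |sigmaf a u / mf a u| < Real.sqrt ε) : varf a u ≤ ε * mf a u ^ 2 := by
  have hm : 0 < mf a u := mf_pos hK hd
  have hv : 0 ≤ varf a u := varf_nonneg hK hd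
  have hσ : 0 ≤ sigmaf a u := Real.sqrt_nonneg _
  rw [abs_of_nonneg (by positivity)] at h
  have h1 : sigmaf a u < Real.sqrt ε * mf a u := by
    rw [div_lt_iff₀ hm] at h
    exact h
  have h2 : sigmaf a u ^ 2 < (Real.sqrt ε * mf a u) ^ 2 := by
    apply sq_lt_sq' _ h1
    have : 0 ≤ Real.sqrt ε * mf a u := by positivity
    linarith
  rw [sigmaf, Real.sq_sqrt hv, mul_pow, Real.sq_sqrt hε.le] at h2
  linarith

lemma clan_threshold (hR : 0 < R) (hclan : IsClan a R) {ε : ℝ} (hε : 0 < ε)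
    {t0 : ℝ} (ht0 : Dom R t0) :
    ∃ T, Dom R T ∧ t0 ≤ T ∧ ∀ u, Dom R u → T ≤ u → varf a u ≤ ε * mf a u ^ 2 := by
  have hev : ∀ᶠ t in nhdsLT R, |sigmaf a t / mf a t| < Real.sqrt ε := by
    have h := Metric.tendsto_nhds.mp hclan (Real.sqrt ε) (Real.sqrt_pos.mpr hε)
    simp only [Real.dist_eq, sub_zero] at h
    exact h
  by_cases hRtop : R = ⊤
  · rw [_root_.nhdsLT, if_pos hRtop, eventually_atTop] at hev
    obtain ⟨T0, hT0⟩ := hev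
    refine ⟨max T0 t0, ⟨lt_of_lt_of_le ht0.1 (le_max_right _ _), by simp [hRtop]⟩,
      le_max_right _ _, fun u hu hTu => ?_⟩
    exact var_of_dist hK hu hε (hT0 u ((le_max_left _ _).trans hTu))
  · rw [_root_.nhdsLT, if_neg hRtop, eventually_iff, mem_nhdsLT_iff_exists_Ioo_subset] at hev
    obtain ⟨l, hl, hsub⟩ := hev
    have ht0R : t0 < R.toReal := dom_lt_toReal hRtop ht0
    set T := max ((l + R.toReal) / 2) ((t0 + R.toReal) / 2) with hT
    have hlR : l < R.toReal := hl
    have hTl : l < T := lt_of_lt_of_le (by linarith) (le_max_left _ _)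
    have hTt0 : t0 ≤ T := le_trans (by linarith) (le_max_right _ _)
    have hTR : T < R.toReal := by
      rw [hT]
      apply max_lt <;> linarith
    refine ⟨T, dom_of_lt_toReal hRtop (ht0.1.trans_le hTt0) hTR, hTt0, fun u hu hTu => ?_⟩
    exact var_of_dist hK hu hε (hsub ⟨hTl.trans_le hTu, dom_lt_toReal hRtop hu⟩)

lemma forward_quotient (hR : 0 < R) (hclan : IsClan a R)
    (hdomS : ∀ᶠ t in nhdsLT R, Dom R t ∧ Dom R (t + t / mf a t)) :
    Tendsto (fun t => mf a (t + t / mf a t) / mf a t) (nhdsLT R) (𝓝 1) := by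
  rw [Metric.tendsto_nhds]
  intro δ hδ
  obtain ⟨t0, ht0⟩ := exists_dom (R := R) hR
  set ε := min (1/2) (δ/4) with hε_def
  have hε : 0 < ε := by
    apply lt_min <;> linarith
  have hε2 : ε ≤ 1/2 := min_le_left _ _
  have hε4 : ε ≤ δ/4 := min_le_right _ _
  obtain ⟨T, hTdom, -, hT⟩ := clan_threshold hK hR hclan hε ht0
  filter_upwards [hdomS, ev_ge_dom hTdom] with t hts hTt'
  obtain ⟨hdt, hds⟩ := hts
  obtain ⟨hTt, -⟩ := hTt'
  have hq := forward_pt hK hε (by linarith) hdt hds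
    (fun u hu => hT u (dom_of_mem_Icc hdt.1 hds hu) (hTt.trans hu.1))
  have h1ε : 0 < 1 - ε := by linarith
  have hup : (1 - ε)⁻¹ ≤ 1 + 2 * ε := by
    rw [inv_le_iff_one_le_mul₀ h1ε]
    nlinarith
  rw [Real.dist_eq, abs_of_nonneg (by linarith [hq.1])]
  have := hq.2
  nlinarith

lemma backward_quotient (hR : 0 < R)
    (hQ : Tendsto (fun t => mf a (t + t / mf a t) / mf a t) (nhdsLT R) (𝓝 1))
    (hdomS : ∀ᶠ t in nhdsLT R, Dom R t ∧ Dom R (t + t / mf a t)) :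
    IsClan a R := by
  obtain ⟨t0, ht0⟩ := exists_dom (R := R) hR
  set c1 := 1 - Real.exp (-(mf a t0 / (mf a t0 + 1))) with hc1_def
  have hQQ : Tendsto (fun t => (mf a (t + t / mf a t) / mf a t)
      * (mf a (t + t / mf a t) / mf a t - 1) / c1) (nhdsLT R) (𝓝 0) := by
    have := (hQ.mul (hQ.sub_const 1)).div_const c1
    simpa using this
  have hsq : Tendsto (fun t => varf a t / mf a t ^ 2) (nhdsLT R) (𝓝 0) := by
    refine squeeze_zero' ?_ ?_ hQQ
    · filter_upwards [ev_ge_dom ht0] with t hdt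
      exact div_nonneg (varf_nonneg hK hdt.2) (by positivity)
    · filter_upwards [hdomS, ev_ge_dom ht0] with t hts ht0t
      exact backward_pt hK ht0 hts.1 ht0t.1 hts.2
  have hsqrt : Tendsto (fun t => Real.sqrt (varf a t / mf a t ^ 2)) (nhdsLT R) (𝓝 0) := by
    have := (Real.continuous_sqrt.tendsto' 0 0 Real.sqrt_zero).comp hsq
    exact this
  refine Tendsto.congr' ?_ hsqrt
  filter_upwards [ev_ge_dom ht0] with t hdt
  have hm : 0 < mf a t := mf_pos hK hdt.2
  rw [Real.sqrt_div (varf_nonneg hK hdt.2), Real.sqrt_sq hm.le]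
  rfl

end filters

section final

variable {a : ℕ → ℝ} {R : ℝ≥0∞} (hK : IsKClass a R)
include hK

lemma ev_domS_top (hRtop : R = ⊤) :
    ∀ᶠ t in nhdsLT R, Dom R t ∧ Dom R (t + t / mf a t) := by
  subst hRtop
  filter_upwards [ev_ge_dom (x := 1) ⟨one_pos, by simp⟩] with t ht
  refine ⟨ht.2, ?_, by simp⟩
  have := s_gt hK ht.2
  linarith [ht.2.1]

lemma ev_domS_lt (hR : 0 < R) (hRtop : R ≠ ⊤)
    (hinf : Tendsto (fun t => (R.toReal - t) * mf a t) (nhdsLT R) atTop) :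
    ∀ᶠ t in nhdsLT R, Dom R t ∧ Dom R (t + t / mf a t) := by
  obtain ⟨t0, ht0⟩ := exists_dom (R := R) hR
  filter_upwards [ev_ge_dom ht0, hinf.eventually_ge_atTop R.toReal] with t ht hge
  have hdt := ht.2
  have hm : 0 < mf a t := mf_pos hK hdt
  have htR : t < R.toReal := dom_lt_toReal hRtop hdt
  refine ⟨hdt, dom_of_lt_toReal hRtop (by nlinarith [s_gt hK hdt, hdt.1]) ?_⟩
  have h1 : t / mf a t < R.toReal - t := by
    rw [div_lt_iff₀ hm]
    nlinarith
  linarith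

lemma unbounded_of_clan (hR : 0 < R) (hRtop : R ≠ ⊤) (hclan : IsClan a R) :
    ∀ C : ℝ, ∃ u, Dom R u ∧ C ≤ mf a u := by
  by_contra hcon
  push_neg at hcon
  obtain ⟨C, hC⟩ := hcon
  obtain ⟨t0, ht0⟩ := exists_dom (R := R) hR
  have hm0 : 0 < mf a t0 := mf_pos hK ht0
  have hCpos : 0 < C := hm0.trans (hC t0 ht0)
  have hRt : 0 < R.toReal := ENNReal.toReal_pos hR.ne' hRtop
  -- log of fsum is bounded
  have hbound : ∀ u, Dom R u → t0 ≤ u →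
      Real.log (S a 0 u) ≤ Real.log (S a 0 t0)
        + C * (Real.log R.toReal - Real.log t0) := by
    intro u hu ht0u
    have key : (fun w => C * Real.log w - Real.log (S a 0 w)) t0
        ≤ (fun w => C * Real.log w - Real.log (S a 0 w)) u := by
      refine mono_of_deriv (g := fun w => C * Real.log w - Real.log (S a 0 w))
        (g' := fun w => C * w⁻¹ - (S a (0+1) w / w) / (S a 0 w)) ht0u
        (fun w hw => ?_) (fun w hw => ?_)
      · have hdw := dom_of_mem_Icc ht0.1 hu hw
        exact ((Real.hasDerivAt_log hdw.1.ne').const_mul C).sub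
          ((hasDerivAt_S hK 0 hdw).log (S0_pos hK hdw).ne')
      · have hdw := dom_of_mem_Icc ht0.1 hu hw
        have hw0 : 0 < w := hdw.1
        have hmw : S a 1 w / S a 0 w < C := by
          rw [← mf_eq]; exact hC w hdw
        have e : C * w⁻¹ - (S a (0+1) w / w) / (S a 0 w)
            = (C - S a 1 w / S a 0 w) / w := by
          have hS0 : S a 0 w ≠ 0 := (S0_pos hK hdw).ne'
          show C * w⁻¹ - (S a 1 w / w) / (S a 0 w) = _
          field_simp
        beta_reduce
        rw [e]
        exact div_nonneg (by linarith) hw0.le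
    simp only at key
    have hlogu : Real.log u ≤ Real.log R.toReal :=
      Real.log_le_log (hu.1) (dom_lt_toReal hRtop hu).le
    nlinarith [Real.log_le_log ht0.1 ht0u]
  set B := Real.exp (Real.log (S a 0 t0) + C * (Real.log R.toReal - Real.log t0)) with hB
  have hBpos : 0 < B := Real.exp_pos _
  have hS0B : ∀ u, Dom R u → t0 ≤ u → S a 0 u ≤ B := by
    intro u hu ht0u
    have := hbound u hu ht0u
    have h2 : S a 0 u = Real.exp (Real.log (S a 0 u)) :=
      (Real.exp_log (S0_pos hK hu)).symm
    rw [h2, hB]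
    exact Real.exp_le_exp.mpr this
  set v0 := mf a t0 ^ 2 * a 0 / B with hv0
  have hv0pos : 0 < v0 := by
    have := hK.2.1
    positivity
  have hvar : ∀ u, Dom R u → t0 ≤ u → v0 ≤ varf a u := by
    intro u hu ht0u
    refine le_trans ?_ (varf_lower hK hu)
    rw [hv0]
    have h1 : mf a t0 ≤ mf a u := mf_mono hK ht0 hu ht0u
    have h2 : S a 0 u ≤ B := hS0B u hu ht0u
    have h3 : 0 < S a 0 u := S0_pos hK hu
    have ha0 := hK.2.1
    have hm0' := hm0
    exact div_le_div₀ (by positivity)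
      (mul_le_mul_of_nonneg_right (by nlinarith) ha0.le) h3 h2
  -- contradiction with clan
  haveI hne : (nhdsLT R).NeBot := by
    rw [_root_.nhdsLT, if_neg hRtop]
    exact nhdsLT_neBot _
  have hev : ∀ᶠ t in nhdsLT R, |sigmaf a t / mf a t| < Real.sqrt v0 / C := by
    have h := Metric.tendsto_nhds.mp hclan (Real.sqrt v0 / C)
      (div_pos (Real.sqrt_pos.mpr hv0pos) hCpos)
    simp only [Real.dist_eq, sub_zero] at h
    exact h
  obtain ⟨t, hlt, ht0t, hdt⟩ := (hev.and (ev_ge_dom ht0)).exists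
  have hm : 0 < mf a t := mf_pos hK hdt
  have hσ : Real.sqrt v0 ≤ sigmaf a t := by
    rw [sigmaf]
    exact Real.sqrt_le_sqrt (hvar t hdt ht0t)
  have hmC : mf a t < C := hC t hdt
  have : Real.sqrt v0 / C ≤ sigmaf a t / mf a t := by
    have hσ0 : 0 ≤ sigmaf a t := Real.sqrt_nonneg _
    gcongr
  have hσ0' : (0:ℝ) ≤ sigmaf a t / mf a t := div_nonneg (Real.sqrt_nonneg _) hm.le
  rw [abs_of_nonneg hσ0'] at hlt
  linarith

lemma forward_infty (hR : 0 < R) (hRtop : R ≠ ⊤) (hclan : IsClan a R) :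
    Tendsto (fun t => (R.toReal - t) * mf a t) (nhdsLT R) atTop := by
  obtain ⟨t0, ht0⟩ := exists_dom (R := R) hR
  rw [tendsto_atTop]
  intro C
  have hmax : (0:ℝ) < max C 1 := lt_of_lt_of_le one_pos (le_max_right _ _)
  set ε := min (1/2) (t0 / max C 1) with hε_def
  have hε : 0 < ε := lt_min (by norm_num) (div_pos ht0.1 hmax)
  have hεle : ε * max C 1 ≤ t0 := by
    rw [← le_div_iff₀ hmax]
    exact min_le_right _ _
  obtain ⟨T, hTdom, hTt0, hT⟩ := clan_threshold hK hR hclan hε ht0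
  filter_upwards [ev_ge_dom hTdom] with t ht
  obtain ⟨hTt, hdt⟩ := ht
  have hm : 0 < mf a t := mf_pos hK hdt
  have htR : t < R.toReal := dom_lt_toReal hRtop hdt
  have ht0T : t0 ≤ t := hTt0.trans hTt
  have ht00 : 0 < t0 := ht0.1
  -- key: (mf t)⁻¹ ≤ ε * (R.toReal - t) / t0
  have h1m : (mf a t)⁻¹ ≤ ε * (R.toReal - t) / t0 := by
    apply le_of_forall_pos_le_add
    intro η hη
    obtain ⟨u, hu, hCu⟩ := unbounded_of_clan hK hR hRtop hclan (1/η)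
    set s := max t u with hs_def
    have hds : Dom R s := by
      rcases le_total u t with h | h
      · rw [hs_def, max_eq_left h]; exact hdt
      · rw [hs_def, max_eq_right h]; exact hu
    have hts : t ≤ s := le_max_left _ _
    have hstep := forward_step hK hε hdt hds hts
      (fun w hw => hT w (dom_of_mem_Icc hdt.1 hds hw) (hTt.trans hw.1))
    have hMs : 1/η ≤ mf a s := hCu.trans (mf_mono hK hu hds (le_max_right _ _))
    have hMinv : (mf a s)⁻¹ ≤ η := by
      have h0 : 0 < mf a s := mf_pos hK hds
      rw [inv_le_comm₀ h0 hη]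
      rwa [inv_eq_one_div]
    have hs0 : 0 < s := hdt.1.trans_le hts
    have hlog : Real.log s - Real.log t ≤ (R.toReal - t) / t0 := by
      have h1 : Real.log (s / t) = Real.log s - Real.log t :=
        Real.log_div hs0.ne' hdt.1.ne'
      have h2 : Real.log (s / t) ≤ s / t - 1 :=
        Real.log_le_sub_one_of_pos (div_pos hs0 hdt.1)
      have h3 : (s - t) / t = s / t - 1 := by
        rw [sub_div, div_self hdt.1.ne']
      have h4 : (s - t) / t ≤ (R.toReal - t) / t0 := by
        have hsR : s ≤ R.toReal := (dom_lt_toReal hRtop hds).le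
        gcongr
      linarith
    have h5 : ε * (Real.log s - Real.log t) ≤ ε * ((R.toReal - t) / t0) :=
      mul_le_mul_of_nonneg_left hlog hε.le
    have h6 : ε * ((R.toReal - t) / t0) = ε * (R.toReal - t) / t0 := by ring
    linarith
  -- conclude
  have h2 : t0 ≤ ε * (R.toReal - t) * mf a t := by
    rw [inv_eq_one_div, div_le_div_iff₀ hm ht00] at h1m
    linarith
  have hRtpos : 0 < R.toReal - t := by linarith
  have hCle : C * ε ≤ t0 := by
    have : C ≤ max C 1 := le_max_left _ _
    nlinarith
  nlinarith

end final

/-- (i) if `R = ∞`, `f` is a clan iff `m_f(t + t/m_f(t))/m_f(t) → 1`;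
(ii) if `R < ∞`, `f` is a clan iff `(R − t)·m_f(t) → ∞` and
`m_f(t + t/m_f(t))/m_f(t) → 1` as `t ↑ R`. -/
theorem clan_iff_mean_quotient (a : ℕ → ℝ) (R : ℝ≥0∞) (hR : 0 < R)
    (hK : IsKClass a R) :
    (R = ⊤ →
      (IsClan a R ↔
        Tendsto (fun t => mf a (t + t / mf a t) / mf a t) (nhdsLT R) (𝓝 1))) ∧
    (R ≠ ⊤ →
      (IsClan a R ↔
        (Tendsto (fun t => (R.toReal - t) * mf a t) (nhdsLT R) atTop ∧
          Tendsto (fun t => mf a (t + t / mf a t) / mf a t) (nhdsLT R) (𝓝 1)))) := by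
  constructor
  · intro hRtop
    constructor
    · intro hclan
      exact forward_quotient hK hR hclan (ev_domS_top hK hRtop)
    · intro hQ
      exact backward_quotient hK hR hQ (ev_domS_top hK hRtop)
  · intro hRtop
    constructor
    · intro hclan
      have h1 := forward_infty hK hR hRtop hclan
      exact ⟨h1, forward_quotient hK hR hclan (ev_domS_lt hK hR hRtop h1)⟩
    · rintro ⟨h1, hQ⟩
      exact backward_quotient hK hR hQ (ev_domS_lt hK hR hRtop h1)
end
end

section
/- Let f be a power series in the class K with radius of convergence R and assume M_f = lim_{t↑R} m_f(t) = +∞. Then f is a clan if and only if both of the following hold: (i) there exists T ∈ (0,R) such that t + t/m_f(t) < R for all t ∈ [T,R), and (ii) lim_{t↑R} ln( f(t + t/m_f(t)) / f(t) ) = 1. -/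
open Filter MeasureTheory Topology Real
open scoped ENNReal

noncomputable section

namespace ClanAux

open Set

def S1 (a : ℕ → ℝ) (t : ℝ) : ℝ := ∑' n : ℕ, (n : ℝ) * a n * t ^ n
def S2 (a : ℕ → ℝ) (t : ℝ) : ℝ := ∑' n : ℕ, (n : ℝ) ^ 2 * a n * t ^ n
def dom (R : ℝ≥0∞) : Set ℝ := {t : ℝ | 0 < t ∧ ENNReal.ofReal t < R}

variable {a : ℕ → ℝ} {R : ℝ≥0∞}

lemma mem_dom {t : ℝ} : t ∈ dom R ↔ 0 < t ∧ ENNReal.ofReal t < R := Iff.rfl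

lemma dom_top (h : R = ⊤) : dom R = Ioi 0 := by
  ext t; simp [dom, h]

lemma dom_fin (h : R ≠ ⊤) : dom R = Ioo 0 R.toReal := by
  ext t
  constructor
  · rintro ⟨ht, htR⟩
    exact ⟨ht, (ENNReal.ofReal_lt_iff_lt_toReal ht.le h).1 htR⟩
  · rintro ⟨ht, htR⟩
    exact ⟨ht, (ENNReal.ofReal_lt_iff_lt_toReal ht.le h).2 htR⟩

lemma convex_dom : Convex ℝ (dom R) := by
  rcases eq_or_ne R ⊤ with h | h
  · rw [dom_top h]; exact convex_Ioi 0
  · rw [dom_fin h]; exact convex_Ioo _ _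

lemma isOpen_dom : IsOpen (dom R) := by
  rcases eq_or_ne R ⊤ with h | h
  · rw [dom_top h]; exact isOpen_Ioi
  · rw [dom_fin h]; exact isOpen_Ioo

lemma Icc_subset_dom {t₁ t₂ : ℝ} (h1 : t₁ ∈ dom R) (h2 : t₂ ∈ dom R) :
    Icc t₁ t₂ ⊆ dom R :=
  convex_dom.ordConnected.out h1 h2

lemma summ0 (hK : IsKClass a R) {t : ℝ} (ht : t ∈ dom R) :
    Summable fun n : ℕ => a n * t ^ n := by
  have := hK.2.2.2.1 0 t ht.1 ht.2
  refine this.congr fun n => ?_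
  rw [Real.rpow_zero, one_mul]

lemma summ1 (hK : IsKClass a R) {t : ℝ} (ht : t ∈ dom R) :
    Summable fun n : ℕ => (n : ℝ) * a n * t ^ n := by
  have := hK.2.2.2.1 1 t ht.1 ht.2
  refine this.congr fun n => ?_
  rw [Real.rpow_one]

lemma summ2 (hK : IsKClass a R) {t : ℝ} (ht : t ∈ dom R) :
    Summable fun n : ℕ => (n : ℝ) ^ 2 * a n * t ^ n := by
  have := hK.2.2.2.1 2 t ht.1 ht.2
  refine this.congr fun n => ?_
  rw [show (2 : ℝ) = ((2 : ℕ) : ℝ) by norm_num, Real.rpow_natCast]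

lemma fsum_pos (hK : IsKClass a R) {t : ℝ} (ht : t ∈ dom R) : 0 < fsum a t := by
  have h0 : a 0 * t ^ 0 ≤ fsum a t := by
    refine (summ0 hK ht).le_tsum 0 fun j _ => ?_
    exact mul_nonneg (hK.1 j) (pow_nonneg ht.1.le j)
  simpa using lt_of_lt_of_le (by simpa using hK.2.1) h0

lemma S1_pos (hK : IsKClass a R) {t : ℝ} (ht : t ∈ dom R) : 0 < S1 a t := by
  obtain ⟨N, hN1, hNpos⟩ := hK.2.2.1
  have h0 : (N : ℝ) * a N * t ^ N ≤ S1 a t := by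
    refine (summ1 hK ht).le_tsum N fun j _ => ?_
    exact mul_nonneg (mul_nonneg (Nat.cast_nonneg j) (hK.1 j)) (pow_nonneg ht.1.le j)
  refine lt_of_lt_of_le ?_ h0
  have hN : (0:ℝ) < N := by exact_mod_cast hN1
  exact mul_pos (mul_pos hN hNpos) (pow_pos ht.1 N)

lemma mf_eq (t : ℝ) : mf a t = S1 a t / fsum a t := by
  unfold mf moment S1
  congr 1
  exact tsum_congr fun n => by rw [Real.rpow_one]

lemma moment2_eq (t : ℝ) : moment a 2 t = S2 a t / fsum a t := by
  unfold moment S2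
  congr 1
  exact tsum_congr fun n => by
    rw [show (2 : ℝ) = ((2 : ℕ) : ℝ) by norm_num, Real.rpow_natCast]

lemma mf_pos (hK : IsKClass a R) {t : ℝ} (ht : t ∈ dom R) : 0 < mf a t := by
  rw [mf_eq]; exact div_pos (S1_pos hK ht) (fsum_pos hK ht)

lemma S1_eq (hK : IsKClass a R) {t : ℝ} (ht : t ∈ dom R) :
    S1 a t = mf a t * fsum a t := by
  rw [mf_eq, div_mul_cancel₀]
  exact (fsum_pos hK ht).ne'

lemma tsum_sub_sq (hK : IsKClass a R) {t : ℝ} (ht : t ∈ dom R) :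
    (∑' n : ℕ, ((n : ℝ) - mf a t) ^ 2 * (a n * t ^ n)) = varf a t * fsum a t := by
  have hs0 := summ0 hK ht
  have hs1 := summ1 hK ht
  have hs2 := summ2 hK ht
  have hf := (fsum_pos hK ht).ne'
  set m := mf a t with hm
  have h1 : (fun n : ℕ => ((n : ℝ) - m) ^ 2 * (a n * t ^ n))
      = fun n : ℕ => ((n : ℝ) ^ 2 * a n * t ^ n - (2 * m) * ((n : ℝ) * a n * t ^ n))
          + m ^ 2 * (a n * t ^ n) := by
    funext n; ring
  rw [h1, Summable.tsum_add ((hs2.sub (hs1.mul_left _))) (hs0.mul_left _),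
    Summable.tsum_sub hs2 (hs1.mul_left _), tsum_mul_left, tsum_mul_left]
  have h2 : varf a t = S2 a t / fsum a t - m ^ 2 := by
    rw [varf, moment2_eq, hm]
  show S2 a t - 2 * m * S1 a t + m ^ 2 * fsum a t = varf a t * fsum a t
  rw [h2, S1_eq hK ht, ← hm]
  field_simp
  ring

lemma varf_nonneg (hK : IsKClass a R) {t : ℝ} (ht : t ∈ dom R) : 0 ≤ varf a t := by
  have h := tsum_sub_sq hK ht
  have hnn : 0 ≤ (∑' n : ℕ, ((n : ℝ) - mf a t) ^ 2 * (a n * t ^ n)) :=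
    tsum_nonneg fun n => mul_nonneg (sq_nonneg _)
      (mul_nonneg (hK.1 n) (pow_nonneg ht.1.le n))
  nlinarith [fsum_pos hK ht]

lemma sigmaf_sq (hK : IsKClass a R) {t : ℝ} (ht : t ∈ dom R) :
    sigmaf a t ^ 2 = varf a t := Real.sq_sqrt (varf_nonneg hK ht)

lemma exists_upper {t : ℝ} (ht : t ∈ dom R) : ∃ r, t < r ∧ r ∈ dom R := by
  rcases eq_or_ne R ⊤ with h | h
  · exact ⟨t + 1, by linarith [ht.1], by rw [dom_top h]; exact lt_trans ht.1 (by linarith [ht.1])⟩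
  · have ht' := (dom_fin h) ▸ ht
    obtain ⟨r, hr1, hr2⟩ := exists_between ht'.2
    exact ⟨r, hr1, by rw [dom_fin h]; exact ⟨lt_trans ht'.1 hr1, hr2⟩⟩

lemma hasDerivAt_core (b : ℕ → ℝ) (hb : ∀ n, 0 ≤ b n)
    (hsum : ∀ s : ℝ, s ∈ dom R → Summable fun n : ℕ => b n * s ^ n)
    (hsum' : ∀ s : ℝ, s ∈ dom R → Summable fun n : ℕ => (n : ℝ) * b n * s ^ n)
    {t : ℝ} (ht : t ∈ dom R) :
    HasDerivAt (fun x : ℝ => ∑' n : ℕ, b n * x ^ n)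
      ((∑' n : ℕ, (n : ℝ) * b n * t ^ n) / t) t := by
  obtain ⟨r, htr, hr⟩ := exists_upper ht
  have hr0 : 0 < r := lt_trans ht.1 htr
  have hts : t ∈ Ioo (-r) r := ⟨by linarith [ht.1], htr⟩
  have hu_summ : Summable (fun n : ℕ => (n : ℝ) * b n * r ^ (n - 1)) := by
    refine ((hsum' r hr).div_const r).congr fun n => ?_
    cases n with
    | zero => simp
    | succ k =>
      rw [pow_succ]
      field_simp
      simp
  have hderiv : ∀ (n : ℕ) (y : ℝ), y ∈ Ioo (-r) r →
      HasDerivAt (fun x : ℝ => b n * x ^ n) (b n * ((n : ℝ) * y ^ (n - 1))) y :=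
    fun n y _ => (hasDerivAt_pow n y).const_mul (b n)
  have hbound : ∀ (n : ℕ) (y : ℝ), y ∈ Ioo (-r) r →
      ‖b n * ((n : ℝ) * y ^ (n - 1))‖ ≤ (n : ℝ) * b n * r ^ (n - 1) := by
    intro n y hy
    have hyr : |y| ≤ r := by rw [abs_le]; exact ⟨hy.1.le, hy.2.le⟩
    have hpow : |y| ^ (n - 1) ≤ r ^ (n - 1) := pow_le_pow_left₀ (abs_nonneg y) hyr _
    rw [Real.norm_eq_abs, abs_mul, abs_mul, abs_of_nonneg (hb n),
      abs_of_nonneg (Nat.cast_nonneg n : (0:ℝ) ≤ n), abs_pow]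
    calc b n * ((n : ℝ) * |y| ^ (n - 1)) ≤ b n * ((n : ℝ) * r ^ (n - 1)) :=
          mul_le_mul_of_nonneg_left
            (mul_le_mul_of_nonneg_left hpow (Nat.cast_nonneg n)) (hb n)
      _ = (n : ℝ) * b n * r ^ (n - 1) := by ring
  have hmain := hasDerivAt_tsum_of_isPreconnected hu_summ isOpen_Ioo
    (convex_Ioo (-r) r).isPreconnected hderiv hbound hts (hsum t ht) hts
  refine hmain.congr_deriv ?_
  rw [← tsum_div_const]
  refine tsum_congr fun n => ?_
  cases n with
  | zero => simp
  | succ k =>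
    rw [pow_succ]
    have := ht.1.ne'
    field_simp
    simp

lemma hasDerivAt_fsum (hK : IsKClass a R) {t : ℝ} (ht : t ∈ dom R) :
    HasDerivAt (fsum a) (S1 a t / t) t := by
  exact hasDerivAt_core a hK.1 (fun s hs => summ0 hK hs) (fun s hs => summ1 hK hs) ht

lemma hasDerivAt_S1 (hK : IsKClass a R) {t : ℝ} (ht : t ∈ dom R) :
    HasDerivAt (S1 a) (S2 a t / t) t := by
  have h := hasDerivAt_core (fun n => (n : ℝ) * a n)
    (fun n => mul_nonneg (Nat.cast_nonneg n) (hK.1 n))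
    (fun s hs => summ1 hK hs)
    (fun s hs => (summ2 hK hs).congr fun n => by ring) ht
  convert h using 2
  exact tsum_congr fun n => by ring
  exact tsum_congr fun n => by ring

lemma hasDerivAt_mf (hK : IsKClass a R) {t : ℝ} (ht : t ∈ dom R) :
    HasDerivAt (mf a) (varf a t / t) t := by
  have hf := hasDerivAt_fsum hK ht
  have hS1 := hasDerivAt_S1 hK ht
  have hfne := (fsum_pos hK ht).ne'
  have htne := ht.1.ne'
  have h := hS1.div hf hfne
  have heq : mf a = fun x => S1 a x / fsum a x := funext fun x => mf_eq x
  rw [heq]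
  refine h.congr_deriv ?_
  rw [varf, moment2_eq, mf_eq]
  field_simp

lemma hasDerivAt_logf (hK : IsKClass a R) {t : ℝ} (ht : t ∈ dom R) :
    HasDerivAt (fun x => Real.log (fsum a x)) (mf a t / t) t := by
  have h := (hasDerivAt_fsum hK ht).log (fsum_pos hK ht).ne'
  convert h using 1
  rw [mf_eq]
  field_simp

lemma mono_mf (hK : IsKClass a R) : MonotoneOn (mf a) (dom R) := by
  have hint : interior (dom R) = dom R := isOpen_dom.interior_eq
  refine monotoneOn_of_deriv_nonneg convex_dom
    (fun x hx => (hasDerivAt_mf hK hx).continuousAt.continuousWithinAt) ?_ ?_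
  · rw [hint]
    exact fun x hx => (hasDerivAt_mf hK hx).differentiableAt.differentiableWithinAt
  · intro x hx
    rw [hint] at hx
    rw [(hasDerivAt_mf hK hx).deriv]
    exact div_nonneg (varf_nonneg hK hx) hx.1.le

lemma comparison (hK : IsKClass a R) {t₁ t₂ ε : ℝ} (h1 : t₁ ∈ dom R) (h2 : t₂ ∈ dom R)
    (h12 : t₁ ≤ t₂) (hε : 0 < ε)
    (hvar : ∀ x, t₁ ≤ x → x ≤ t₂ → varf a x ≤ ε * (mf a x) ^ 2) :
    1 / mf a t₁ - ε * Real.log (t₂ / t₁) ≤ 1 / mf a t₂ := by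
  rcases eq_or_lt_of_le h12 with rfl | hlt
  · rw [div_self h1.1.ne', Real.log_one]
    simp
  set φ : ℝ → ℝ := fun x => (mf a x)⁻¹ + ε * Real.log x with hφ
  set φ' : ℝ → ℝ := fun x => -(varf a x / x) / (mf a x) ^ 2 + ε * x⁻¹ with hφ'
  have hsub : Icc t₁ t₂ ⊆ dom R := Icc_subset_dom h1 h2
  have hderiv : ∀ x ∈ Icc t₁ t₂, HasDerivAt φ (φ' x) x := by
    intro x hx
    have hxd := hsub hx
    exact ((hasDerivAt_mf hK hxd).inv (mf_pos hK hxd).ne').add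
      ((Real.hasDerivAt_log hxd.1.ne').const_mul ε)
  obtain ⟨c, hc, hslope⟩ := exists_hasDerivAt_eq_slope φ φ' hlt
    (fun x hx => (hderiv x hx).continuousAt.continuousWithinAt)
    (fun x hx => hderiv x (Ioo_subset_Icc_self hx))
  have hcd : c ∈ dom R := hsub (Ioo_subset_Icc_self hc)
  have hc0 : 0 < c := hcd.1
  have hmc : 0 < mf a c := mf_pos hK hcd
  have hφ'c : 0 ≤ φ' c := by
    have hv : varf a c ≤ ε * (mf a c) ^ 2 := hvar c hc.1.le hc.2.le
    have : φ' c = (ε * (mf a c) ^ 2 - varf a c) / (c * (mf a c) ^ 2) := by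
      rw [hφ']
      field_simp
      ring
    rw [this]
    exact div_nonneg (by linarith) (by positivity)
  have hd : 0 ≤ φ t₂ - φ t₁ := by
    have h' : φ t₂ - φ t₁ = φ' c * (t₂ - t₁) := by
      rw [hslope, div_mul_cancel₀ _ (sub_ne_zero.2 hlt.ne')]
    rw [h']
    exact mul_nonneg hφ'c (by linarith)
  have hlog : Real.log (t₂ / t₁) = Real.log t₂ - Real.log t₁ :=
    Real.log_div h2.1.ne' h1.1.ne'
  have hp1 : φ t₁ = (mf a t₁)⁻¹ + ε * Real.log t₁ := rfl
  have hp2 : φ t₂ = (mf a t₂)⁻¹ + ε * Real.log t₂ := rfl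
  rw [hp1, hp2] at hd
  rw [one_div, one_div, hlog]
  linarith

lemma log_slope (hK : IsKClass a R) {t₁ t₂ : ℝ} (h1 : t₁ ∈ dom R) (h2 : t₂ ∈ dom R)
    (h12 : t₁ < t₂) :
    ∃ c ∈ Ioo t₁ t₂,
      Real.log (fsum a t₂) - Real.log (fsum a t₁) = (t₂ - t₁) * (mf a c / c) := by
  have hsub : Icc t₁ t₂ ⊆ dom R := Icc_subset_dom h1 h2
  obtain ⟨c, hc, hslope⟩ := exists_hasDerivAt_eq_slope (fun x => Real.log (fsum a x))
    (fun x => mf a x / x) h12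
    (fun x hx => (hasDerivAt_logf hK (hsub hx)).continuousAt.continuousWithinAt)
    (fun x hx => hasDerivAt_logf hK (hsub (Ioo_subset_Icc_self hx)))
  refine ⟨c, hc, ?_⟩
  rw [hslope, mul_comm, div_mul_cancel₀ _ (sub_ne_zero.2 h12.ne')]

lemma exists_c (hR : 0 < R) : ∃ c : ℝ, 0 < c ∧ ENNReal.ofReal c < R := by
  rcases eq_or_ne R ⊤ with h | h
  · exact ⟨1, one_pos, by simp [h]⟩
  · have h0 : 0 < R.toReal := ENNReal.toReal_pos hR.ne' h
    refine ⟨R.toReal / 2, by linarith, ?_⟩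
    rw [ENNReal.ofReal_lt_iff_lt_toReal (by linarith) h]
    linarith

lemma extraction (hR : 0 < R) {p : ℝ → Prop} (hp : ∀ᶠ t in nhdsLT R, p t) :
    ∃ c, 0 < c ∧ ENNReal.ofReal c < R ∧ ∀ t, c ≤ t → ENNReal.ofReal t < R → p t := by
  unfold _root_.nhdsLT at hp
  split_ifs at hp with h
  · obtain ⟨c₀, hc₀⟩ := eventually_atTop.1 hp
    exact ⟨max c₀ 1, lt_of_lt_of_le one_pos (le_max_right _ _), by simp [h],
      fun t htc _ => hc₀ t (le_trans (le_max_left _ _) htc)⟩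
  · have h0 : 0 < R.toReal := ENNReal.toReal_pos hR.ne' h
    rw [eventually_iff, mem_nhdsLT_iff_exists_Ioo_subset] at hp
    obtain ⟨l, hl, hsub⟩ := hp
    have hl' : l < R.toReal := hl
    set c := max ((l + R.toReal) / 2) (R.toReal / 2) with hc
    have hc0 : 0 < c := lt_of_lt_of_le (by linarith) (le_max_right _ _)
    have hcR' : c < R.toReal := max_lt (by linarith) (by linarith)
    refine ⟨c, hc0, (ENNReal.ofReal_lt_iff_lt_toReal hc0.le h).2 hcR', fun t htc htR => ?_⟩
    have ht0 : 0 < t := lt_of_lt_of_le hc0 htc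
    have htR' : t < R.toReal := (ENNReal.ofReal_lt_iff_lt_toReal ht0.le h).1 htR
    have hlt : l < t := lt_of_lt_of_le (lt_of_lt_of_le (by linarith) (le_max_left _ _)) htc
    exact hsub ⟨hlt, htR'⟩

lemma eventually_nhdsLT {p : ℝ → Prop} {c : ℝ} (hc0 : 0 < c) (hcR : ENNReal.ofReal c < R)
    (h : ∀ t, c ≤ t → ENNReal.ofReal t < R → p t) : ∀ᶠ t in nhdsLT R, p t := by
  unfold _root_.nhdsLT
  split_ifs with hTop
  · exact eventually_atTop.2 ⟨c, fun t htc => h t htc (by simp [hTop])⟩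
  · have hcR' : c < R.toReal := (ENNReal.ofReal_lt_iff_lt_toReal hc0.le hTop).1 hcR
    rw [eventually_iff]
    refine mem_of_superset (Ioo_mem_nhdsLT hcR') ?_
    rintro t ⟨h1, h2⟩
    exact h t h1.le ((ENNReal.ofReal_lt_iff_lt_toReal (lt_trans hc0 h1).le hTop).2 h2)

lemma eventually_mem_dom (hR : 0 < R) : ∀ᶠ t in nhdsLT R, t ∈ dom R := by
  obtain ⟨c, hc0, hcR⟩ := exists_c (R := R) hR
  exact eventually_nhdsLT hc0 hcR fun t ht htR => ⟨lt_of_lt_of_le hc0 ht, htR⟩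

lemma tendsto_div_add_one : Tendsto (fun x : ℝ => x / (x + 1)) atTop (𝓝 1) := by
  have h : Tendsto (fun x : ℝ => (x + 1)⁻¹) atTop (𝓝 0) :=
    tendsto_inv_atTop_zero.comp (tendsto_atTop_add_const_right atTop 1 tendsto_id)
  have h2 : Tendsto (fun x : ℝ => 1 - (x + 1)⁻¹) atTop (𝓝 (1 - 0)) :=
    tendsto_const_nhds.sub h
  rw [sub_zero] at h2
  refine h2.congr' ?_
  filter_upwards [eventually_gt_atTop (0:ℝ)] with x hx
  have : x + 1 ≠ 0 := by linarith
  field_simp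
  ring

lemma tendsto_mul_log : Tendsto (fun x : ℝ => x * Real.log (1 + 1 / x)) atTop (𝓝 1) := by
  refine tendsto_of_tendsto_of_tendsto_of_le_of_le' tendsto_div_add_one tendsto_const_nhds ?_ ?_
  · filter_upwards [eventually_gt_atTop (0:ℝ)] with x hx
    have hu : (0:ℝ) < 1 + 1 / x := by positivity
    have hinv : Real.log ((1 + 1/x)⁻¹) ≤ (1 + 1/x)⁻¹ - 1 :=
      Real.log_le_sub_one_of_pos (by positivity)
    rw [Real.log_inv] at hinv
    have hlow : 1 - (1 + 1/x)⁻¹ ≤ Real.log (1 + 1/x) := by linarith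
    have hval : 1 - (1 + 1/x)⁻¹ = 1 / (x + 1) := by
      rw [eq_div_iff (by linarith : x + (1:ℝ) ≠ 0)]
      have : (1 + 1/x) ≠ 0 := by positivity
      field_simp
      ring
    rw [hval] at hlow
    have := mul_le_mul_of_nonneg_left hlow hx.le
    calc x / (x + 1) = x * (1 / (x + 1)) := by ring
      _ ≤ x * Real.log (1 + 1/x) := this
  · filter_upwards [eventually_gt_atTop (0:ℝ)] with x hx
    have hup : Real.log (1 + 1/x) ≤ 1/x :=
      le_of_le_of_eq (Real.log_le_sub_one_of_pos (by positivity)) (by ring)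
    have := mul_le_mul_of_nonneg_left hup hx.le
    calc x * Real.log (1 + 1/x) ≤ x * (1/x) := this
      _ = 1 := by field_simp

lemma clan_var (hK : IsKClass a R) (hR : 0 < R) (hclan : IsClan a R) {ε : ℝ}
    (hε : 0 < ε) (hε1 : ε ≤ 1) :
    ∀ᶠ t in nhdsLT R, t ∈ dom R ∧ varf a t ≤ ε * (mf a t) ^ 2 := by
  have h1 : ∀ᶠ t in nhdsLT R, |sigmaf a t / mf a t| < ε := by
    have := Metric.tendsto_nhds.1 hclan ε hε
    simpa only [Real.dist_eq, sub_zero] using this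
  filter_upwards [h1, eventually_mem_dom hR] with t hlt htdom
  refine ⟨htdom, ?_⟩
  have hm := mf_pos hK htdom
  have hσ : 0 ≤ sigmaf a t := Real.sqrt_nonneg _
  have h2 : sigmaf a t / mf a t < ε := lt_of_abs_lt hlt
  have h3 : sigmaf a t < ε * mf a t := (div_lt_iff₀ hm).1 h2
  have h4 : varf a t = sigmaf a t ^ 2 := (sigmaf_sq hK htdom).symm
  nlinarith [sq_nonneg (mf a t)]

lemma forward_i (hK : IsKClass a R) (hR : 0 < R)
    (hM : Tendsto (mf a) (nhdsLT R) atTop) (hclan : IsClan a R) :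
    ∃ T : ℝ, 0 < T ∧ ENNReal.ofReal T < R ∧
      ∀ t : ℝ, T ≤ t → ENNReal.ofReal t < R →
        ENNReal.ofReal (t + t / mf a t) < R := by
  rcases eq_or_ne R ⊤ with hTop | hTop
  · exact ⟨1, one_pos, by simp [hTop], fun t _ _ => by simp [hTop]⟩
  have hR0 : 0 < R.toReal := ENNReal.toReal_pos hR.ne' hTop
  obtain ⟨c₁, hc₁0, hc₁R, hvarc⟩ := extraction hR
    (clan_var hK hR hclan (ε := 1/2) (by norm_num) (by norm_num))
  set T := max c₁ (R.toReal / 2) with hT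
  have hc₁R' : c₁ < R.toReal := (ENNReal.ofReal_lt_iff_lt_toReal hc₁0.le hTop).1 hc₁R
  have hT0 : 0 < T := lt_of_lt_of_le (by linarith) (le_max_right _ _)
  have hTR' : T < R.toReal := max_lt hc₁R' (by linarith)
  refine ⟨T, hT0, (ENNReal.ofReal_lt_iff_lt_toReal hT0.le hTop).2 hTR', fun t hTt htR => ?_⟩
  have ht0 : 0 < t := lt_of_lt_of_le hT0 hTt
  have htR' : t < R.toReal := (ENNReal.ofReal_lt_iff_lt_toReal ht0.le hTop).1 htR
  have htdom : t ∈ dom R := ⟨ht0, htR⟩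
  have hmt := mf_pos hK htdom
  by_contra hcon
  push_neg at hcon
  have hz0 : 0 < t + t / mf a t := by positivity
  have hcon' : R.toReal ≤ t + t / mf a t := by
    have h := ENNReal.toReal_mono ENNReal.ofReal_ne_top hcon
    rwa [ENNReal.toReal_ofReal hz0.le] at h
  obtain ⟨c₃, hc₃0, hc₃R, hmx⟩ := extraction hR (hM.eventually_gt_atTop (2 * mf a t))
  have hc₃R' : c₃ < R.toReal := (ENNReal.ofReal_lt_iff_lt_toReal hc₃0.le hTop).1 hc₃R
  set x := max t c₃ with hx
  have hxR' : x < R.toReal := max_lt htR' hc₃R'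
  have hx0 : 0 < x := lt_of_lt_of_le ht0 (le_max_left _ _)
  have hxdom : x ∈ dom R := ⟨hx0, (ENNReal.ofReal_lt_iff_lt_toReal hx0.le hTop).2 hxR'⟩
  have hmxgt : 2 * mf a t < mf a x := hmx x (le_max_right _ _) hxdom.2
  have htx : t ≤ x := le_max_left _ _
  have hvar' : ∀ y, t ≤ y → y ≤ x → varf a y ≤ (1/2) * (mf a y) ^ 2 := by
    intro y hty hyx
    have hy0 : 0 < y := lt_of_lt_of_le ht0 hty
    have hyR : ENNReal.ofReal y < R :=
      lt_of_le_of_lt (ENNReal.ofReal_le_ofReal hyx) hxdom.2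
    exact (hvarc y (le_trans (le_trans (le_max_left _ _) hTt) hty) hyR).2
  have hcomp := comparison hK htdom hxdom htx (by norm_num : (0:ℝ) < 1/2) hvar'
  have hlog1 : Real.log (x / t) ≤ x / t - 1 := Real.log_le_sub_one_of_pos (by positivity)
  have hstep : x / t - 1 ≤ 1 / mf a t := by
    have h1 : x - t ≤ t / mf a t := by linarith
    have e1 : x / t - 1 = (x - t) / t := by field_simp
    rw [e1]
    calc (x - t) / t ≤ (t / mf a t) / t := (div_le_div_iff_of_pos_right ht0).2 h1
      _ = 1 / mf a t := by
        rw [div_div, mul_comm (mf a t) t, ← div_div, div_self ht0.ne']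
  have hfin : 1 / (2 * mf a t) ≤ 1 / mf a x := by
    have hlog2 : Real.log (x / t) ≤ 1 / mf a t := le_trans hlog1 hstep
    have e2 : 1 / (2 * mf a t) = 1 / mf a t - (1/2) * (1 / mf a t) := by
      field_simp
      ring
    rw [e2]
    have h3 : (1/2 : ℝ) * Real.log (x / t) ≤ (1/2) * (1 / mf a t) :=
      mul_le_mul_of_nonneg_left hlog2 (by norm_num)
    linarith
  have hmfx := mf_pos hK hxdom
  have hxle := (div_le_div_iff₀ (by positivity) hmfx).1 hfin
  linarith

set_option maxHeartbeats 1000000 in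
lemma forward_ii (hK : IsKClass a R) (hR : 0 < R)
    (hM : Tendsto (mf a) (nhdsLT R) atTop) (hclan : IsClan a R)
    (hi : ∃ T : ℝ, 0 < T ∧ ENNReal.ofReal T < R ∧
      ∀ t : ℝ, T ≤ t → ENNReal.ofReal t < R →
        ENNReal.ofReal (t + t / mf a t) < R) :
    Tendsto (fun t => Real.log (fsum a (t + t / mf a t) / fsum a t)) (nhdsLT R) (𝓝 1) := by
  obtain ⟨T, hT0, hTR, hTi⟩ := hi
  rw [Metric.tendsto_nhds]
  intro δ hδ
  obtain ⟨ε, hε0, hε12, hεδ⟩ : ∃ ε : ℝ, 0 < ε ∧ ε ≤ 1/2 ∧ ε ≤ δ/4 :=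
    ⟨min (δ/4) (1/2), lt_min (by linarith) (by norm_num), min_le_right _ _, min_le_left _ _⟩
  obtain ⟨c, hc0, hcR, hvarc⟩ := extraction hR (clan_var hK hR hclan hε0 (by linarith))
  have hring : ENNReal.ofReal (max c T) < R := by
    rcases le_total c T with h | h
    · rwa [max_eq_right h]
    · rwa [max_eq_left h]
  have hev := eventually_nhdsLT (R := R) (p := fun t => max c T ≤ t ∧ ENNReal.ofReal t < R)
    (lt_of_lt_of_le hc0 (le_max_left c T)) hring (fun t h1 h2 => ⟨h1, h2⟩)
  have hm0 : ∀ᶠ t in nhdsLT R, 2/δ < mf a t := hM.eventually_gt_atTop _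
  filter_upwards [hev, hm0] with t hct hmδ
  obtain ⟨hct, htR⟩ := hct
  have ht0 : 0 < t := lt_of_lt_of_le (lt_of_lt_of_le hc0 (le_max_left c T)) hct
  have htdom : t ∈ dom R := ⟨ht0, htR⟩
  have hm := mf_pos hK htdom
  set m := mf a t with hmdef
  set t₂ := t + t / m with ht₂
  have hTt : T ≤ t := le_trans (le_max_right c T) hct
  have h2R : ENNReal.ofReal t₂ < R := hTi t hTt htR
  have ht₂0 : 0 < t₂ := by positivity
  have h2dom : t₂ ∈ dom R := ⟨ht₂0, h2R⟩
  have htt₂ : t < t₂ := by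
    rw [ht₂]
    have h : 0 < t / m := by positivity
    linarith
  obtain ⟨ξ, hξ, hslope⟩ := log_slope hK htdom h2dom htt₂
  have hξdom : ξ ∈ dom R := Icc_subset_dom htdom h2dom ⟨hξ.1.le, hξ.2.le⟩
  have hξ0 : 0 < ξ := hξdom.1
  have hmξ := mf_pos hK hξdom
  have hmono : m ≤ mf a ξ := mono_mf hK htdom hξdom hξ.1.le
  have e1 : t₂ - t = t / m := by rw [ht₂]; ring
  have hδm : 1 / m < δ / 2 := by
    rw [div_lt_iff₀ hm]
    have h1 : 2/δ * (δ/2) < m * (δ/2) := by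
      apply mul_lt_mul_of_pos_right hmδ
      linarith
    have h2 : 2/δ * (δ/2) = 1 := by field_simp
    nlinarith
  have hlow : 1 - δ/2 ≤ (t₂ - t) * (mf a ξ / ξ) := by
    have h3 : m / t₂ ≤ mf a ξ / ξ := div_le_div₀ hmξ.le hmono hξ0 hξ.2.le
    have e3 : t / t₂ = m / (m + 1) := by
      rw [ht₂]
      field_simp
    have h4 : 1 - 1/m ≤ m / (m+1) := by
      have h0 : (0:ℝ) < m + 1 := by linarith
      rw [le_div_iff₀ h0]
      have him : m * (1/m) = 1 := by field_simp
      have hip : 0 < 1/m := by positivity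
      nlinarith [him, hip]
    have h5 : (t/m) * (m/t₂) = t/t₂ := by field_simp
    calc 1 - δ/2 ≤ 1 - 1/m := by linarith
      _ ≤ m / (m+1) := h4
      _ = t / t₂ := e3.symm
      _ = (t/m) * (m/t₂) := h5.symm
      _ ≤ (t/m) * (mf a ξ / ξ) := mul_le_mul_of_nonneg_left h3 (by positivity)
      _ = (t₂ - t) * (mf a ξ / ξ) := by rw [e1]
  have hvar' : ∀ y, t ≤ y → y ≤ ξ → varf a y ≤ ε * (mf a y) ^ 2 := by
    intro y hty hyξ
    have hy0 : 0 < y := lt_of_lt_of_le ht0 hty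
    have hyR : ENNReal.ofReal y < R :=
      lt_of_le_of_lt (ENNReal.ofReal_le_ofReal (le_trans hyξ hξ.2.le)) h2R
    exact (hvarc y (le_trans (le_trans (le_max_left c T) hct) hty) hyR).2
  have hcomp := comparison hK htdom hξdom hξ.1.le hε0 hvar'
  have hlogξ : Real.log (ξ / t) ≤ 1/m := by
    have h1 : Real.log (ξ/t) ≤ ξ/t - 1 := Real.log_le_sub_one_of_pos (by positivity)
    have h2 : ξ - t ≤ t/m := by
      have := hξ.2
      rw [ht₂] at this
      linarith
    have e4 : ξ/t - 1 = (ξ - t)/t := div_sub_one ht0.ne'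
    have h3 : (ξ - t)/t ≤ (t/m)/t := (div_le_div_iff_of_pos_right ht0).2 h2
    have e5 : (t/m)/t = 1/m := by
      rw [div_div, mul_comm m t, ← div_div, div_self ht0.ne']
    calc Real.log (ξ/t) ≤ ξ/t - 1 := h1
      _ = (ξ - t)/t := e4
      _ ≤ (t/m)/t := h3
      _ = 1/m := e5
  have hε1 : (0:ℝ) < 1 - ε := by linarith
  have hmξle : mf a ξ ≤ m / (1 - ε) := by
    have h1 : ε * Real.log (ξ/t) ≤ ε * (1/m) := mul_le_mul_of_nonneg_left hlogξ hε0.le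
    have h2 : (1 - ε)/m ≤ 1/mf a ξ := by
      have e6 : (1 - ε)/m = 1/m - ε * (1/m) := by ring
      rw [e6]
      linarith [hcomp]
    have h3 := (div_le_div_iff₀ hm hmξ).1 h2
    rw [le_div_iff₀ hε1]
    nlinarith
  have hup : (t₂ - t) * (mf a ξ / ξ) ≤ 1 + δ/2 := by
    have h5 : mf a ξ / ξ ≤ (m/(1-ε))/t := div_le_div₀ (by positivity) hmξle ht0 hξ.1.le
    have e7 : (t/m) * ((m/(1-ε))/t) = 1/(1-ε) := by
      rw [eq_div_iff (by linarith : (1:ℝ) - ε ≠ 0)]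
      field_simp
    have h8 : 1/(1-ε) ≤ 1 + 2*ε := by
      rw [div_le_iff₀ hε1]
      have h8' : 0 ≤ ε * (1 - 2*ε) := mul_nonneg hε0.le (by linarith)
      have hexp : (1+2*ε)*(1-ε) = 1 + ε*(1-2*ε) := by ring
      linarith
    calc (t₂ - t) * (mf a ξ/ξ) ≤ (t/m) * ((m/(1-ε))/t) := by
          rw [e1]; exact mul_le_mul_of_nonneg_left h5 (le_of_lt (div_pos ht0 hm))
      _ = 1/(1-ε) := e7
      _ ≤ 1 + 2*ε := h8
      _ ≤ 1 + δ/2 := by linarith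
  have hlogdiv : Real.log (fsum a t₂ / fsum a t)
      = Real.log (fsum a t₂) - Real.log (fsum a t) :=
    Real.log_div (fsum_pos hK h2dom).ne' (fsum_pos hK htdom).ne'
  rw [Real.dist_eq, hlogdiv, hslope]
  rw [abs_sub_lt_iff]
  constructor <;> nlinarith [hlow, hup, hδ]

lemma reverse (hK : IsKClass a R) (hR : 0 < R)
    (hM : Tendsto (mf a) (nhdsLT R) atTop)
    (hi : ∃ T : ℝ, 0 < T ∧ ENNReal.ofReal T < R ∧
      ∀ t : ℝ, T ≤ t → ENNReal.ofReal t < R →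
        ENNReal.ofReal (t + t / mf a t) < R)
    (hii : Tendsto (fun t => Real.log (fsum a (t + t / mf a t) / fsum a t))
      (nhdsLT R) (𝓝 1)) :
    IsClan a R := by
  obtain ⟨T, hT0, hTR, hTi⟩ := hi
  set θ : ℝ → ℝ := fun t => Real.log (1 + 1 / mf a t) with hθdef
  have hev : ∀ᶠ t in nhdsLT R, T ≤ t ∧ t ∈ dom R :=
    eventually_nhdsLT hT0 hTR fun t h1 h2 => ⟨h1, lt_of_lt_of_le hT0 h1, h2⟩
  have hkey : ∀ᶠ t in nhdsLT R,
      varf a t * θ t ^ 2 / 4 ≤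
        Real.exp (Real.log (fsum a (t + t / mf a t) / fsum a t) - mf a t * θ t) - 1 := by
    filter_upwards [hev] with t ht
    obtain ⟨hTt, htdom⟩ := ht
    have ht0 : 0 < t := htdom.1
    have hm := mf_pos hK htdom
    have hf := fsum_pos hK htdom
    set m := mf a t with hmdef
    set f := fsum a t with hfdef
    set u : ℝ := 1 + 1 / m with hudef
    have hu1 : 1 < u := by
      rw [hudef]
      have : 0 < 1/m := by positivity
      linarith
    have hu0 : 0 < u := by linarith
    have hθpos : 0 < θ t := Real.log_pos hu1
    have hθm : m * θ t < 1 := by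
      have h1 : Real.log u < u - 1 := Real.log_lt_sub_one_of_pos hu0 hu1.ne'
      have h2 : u - 1 = 1/m := by rw [hudef]; ring
      have h3 : θ t = Real.log u := rfl
      rw [h3]
      calc m * Real.log u < m * (u - 1) := mul_lt_mul_of_pos_left h1 hm
        _ = m * (1/m) := by rw [h2]
        _ = 1 := by field_simp
    set t₂ := t + t / m with ht₂def
    have ht₂u : t₂ = t * u := by rw [ht₂def, hudef]; ring
    have ht₂0 : 0 < t₂ := by positivity
    have h2dom : t₂ ∈ dom R := ⟨ht₂0, hTi t hTt htdom.2⟩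
    -- pointwise inequality
    have hpt : ∀ n : ℕ,
        Real.exp (m * θ t) * ((a n * t ^ n)
          + θ t * (((n:ℝ) - m) * (a n * t ^ n))
          + θ t ^ 2 / 4 * (((n:ℝ) - m) ^ 2 * (a n * t ^ n)))
        ≤ a n * t₂ ^ n := by
      intro n
      set x := a n * t ^ n with hxdef
      have hx0 : 0 ≤ x := mul_nonneg (hK.1 n) (pow_nonneg ht0.le n)
      set y := θ t * ((n:ℝ) - m) with hydef
      have hy2 : -2 ≤ y := by
        have h1 : -m ≤ (n:ℝ) - m := by
          have : (0:ℝ) ≤ (n:ℝ) := Nat.cast_nonneg n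
          linarith
        have h2 : θ t * (-m) ≤ θ t * ((n:ℝ) - m) := mul_le_mul_of_nonneg_left h1 hθpos.le
        have h3 : θ t * (-m) = -(m * θ t) := by ring
        rw [hydef]
        nlinarith [hθm]
      have hexp : (1 + y/2)^2 ≤ Real.exp y := by
        have h1 : 1 + y/2 ≤ Real.exp (y/2) := by
          have := Real.add_one_le_exp (y/2)
          linarith
        have h0 : 0 ≤ 1 + y/2 := by linarith
        calc (1 + y/2)^2 ≤ (Real.exp (y/2))^2 := by
              apply pow_le_pow_left₀ h0 h1
          _ = Real.exp y := by
              rw [sq, ← Real.exp_add]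
              norm_num
      have hun : u ^ n = Real.exp ((n:ℝ) * θ t) := by
        have : u = Real.exp (θ t) := (Real.exp_log hu0).symm
        rw [this, ← Real.exp_nat_mul]
      have hLHS : a n * t₂ ^ n = Real.exp (m * θ t) * (x * Real.exp y) := by
        rw [ht₂u, mul_pow, hun, hxdef]
        rw [show (n:ℝ) * θ t = m * θ t + y by rw [hydef]; ring, Real.exp_add]
        ring
      have hRHS : Real.exp (m * θ t) * (x + θ t * (((n:ℝ) - m) * x)
          + θ t ^ 2 / 4 * (((n:ℝ) - m) ^ 2 * x))
          = Real.exp (m * θ t) * (x * (1 + y/2)^2) := by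
        congr 1
        rw [hydef]
        ring
      rw [hLHS, hRHS]
      have := mul_le_mul_of_nonneg_left hexp hx0
      have hE : 0 ≤ Real.exp (m * θ t) := (Real.exp_pos _).le
      exact mul_le_mul_of_nonneg_left (by nlinarith) hE
    -- summability
    have hs0 := summ0 hK htdom
    have hs1 := summ1 hK htdom
    have hs2 := summ2 hK htdom
    have hlin : Summable (fun n : ℕ => ((n:ℝ) - m) * (a n * t ^ n)) := by
      refine ((hs1.sub (hs0.mul_left m))).congr fun n => ?_
      ring
    have hquad : Summable (fun n : ℕ => ((n:ℝ) - m) ^ 2 * (a n * t ^ n)) := by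
      refine (((hs2.sub (hs1.mul_left (2*m)))).add (hs0.mul_left (m^2))).congr fun n => ?_
      ring
    have hsumR : Summable (fun n : ℕ => Real.exp (m * θ t) * ((a n * t ^ n)
        + θ t * (((n:ℝ) - m) * (a n * t ^ n))
        + θ t ^ 2 / 4 * (((n:ℝ) - m) ^ 2 * (a n * t ^ n)))) := by
      exact (((hs0.add (hlin.mul_left (θ t))).add (hquad.mul_left (θ t ^2/4))).mul_left _)
    have hsumL : Summable (fun n : ℕ => a n * t₂ ^ n) := summ0 hK h2dom
    have hineq := hsumR.tsum_le_tsum hpt hsumL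
    have hfs2 : (∑' (n : ℕ), a n * t₂ ^ n) = fsum a t₂ := rfl
    rw [hfs2] at hineq
    -- compute tsum of RHS-lower
    have htlin : (∑' n : ℕ, ((n:ℝ) - m) * (a n * t ^ n)) = 0 := by
      have h1 : (fun n : ℕ => ((n:ℝ) - m) * (a n * t ^ n))
          = fun n : ℕ => ((n:ℝ) * a n * t ^ n) - m * (a n * t ^ n) := by
        funext n; ring
      rw [h1, Summable.tsum_sub hs1 (hs0.mul_left m), tsum_mul_left]
      have h2 : S1 a t = m * fsum a t := S1_eq hK htdom
      show S1 a t - m * fsum a t = 0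
      rw [h2]
      ring
    have htquad := tsum_sub_sq hK htdom
    have htsumR : (∑' n : ℕ, Real.exp (m * θ t) * ((a n * t ^ n)
        + θ t * (((n:ℝ) - m) * (a n * t ^ n))
        + θ t ^ 2 / 4 * (((n:ℝ) - m) ^ 2 * (a n * t ^ n))))
        = Real.exp (m * θ t) * (f * (1 + varf a t * θ t ^ 2 / 4)) := by
      rw [tsum_mul_left]
      congr 1
      rw [Summable.tsum_add (hs0.add (hlin.mul_left (θ t))) (hquad.mul_left (θ t ^2/4)),
        Summable.tsum_add hs0 (hlin.mul_left (θ t)), tsum_mul_left, tsum_mul_left,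
        htlin, htquad]
      show f + θ t * 0 + θ t ^ 2/4 * (varf a t * f) = f * (1 + varf a t * θ t ^2/4)
      ring
    rw [htsumR] at hineq
    -- hineq : exp(mθ) * (f * (1 + Q)) ≤ fsum a t₂
    have hQ0 : 0 ≤ varf a t * θ t ^ 2 / 4 := by
      have := varf_nonneg hK htdom
      positivity
    have hQpos : 0 < 1 + varf a t * θ t ^ 2 / 4 := by linarith
    have hargpos : 0 < Real.exp (m * θ t) * (f * (1 + varf a t * θ t ^ 2 / 4)) := by
      positivity
    have hlog := (Real.log_le_log_iff hargpos (lt_of_lt_of_le hargpos hineq)).2 hineq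
    have hL1 : Real.log (Real.exp (m * θ t) * (f * (1 + varf a t * θ t ^ 2 / 4)))
        = m * θ t + (Real.log f + Real.log (1 + varf a t * θ t ^ 2 / 4)) := by
      rw [Real.log_mul (Real.exp_pos _).ne' (mul_pos hf hQpos).ne', Real.log_exp,
        Real.log_mul hf.ne' hQpos.ne']
    rw [hL1] at hlog
    have hlogdiv : Real.log (fsum a t₂ / f)
        = Real.log (fsum a t₂) - Real.log f :=
      Real.log_div (fsum_pos hK h2dom).ne' hf.ne'
    have h9 : Real.log (1 + varf a t * θ t ^ 2 / 4)
        ≤ Real.log (fsum a t₂ / f) - m * θ t := by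
      rw [hlogdiv]
      linarith
    have h10 := (Real.log_le_iff_le_exp hQpos).1 h9
    have : fsum a (t + t / mf a t) = fsum a t₂ := rfl
    rw [this]
    linarith
  -- limits
  have hmθ : Tendsto (fun t => mf a t * θ t) (nhdsLT R) (𝓝 1) := tendsto_mul_log.comp hM
  have hrhs : Tendsto (fun t =>
      Real.exp (Real.log (fsum a (t + t / mf a t) / fsum a t) - mf a t * θ t) - 1)
      (nhdsLT R) (𝓝 0) := by
    have h1 := hii.sub hmθ
    rw [sub_self] at h1
    have h2 := (Real.continuous_exp.tendsto 0).comp h1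
    rw [Real.exp_zero] at h2
    have h3 := h2.sub (tendsto_const_nhds (x := (1:ℝ)))
    rw [sub_self] at h3
    exact h3
  have hsq : Tendsto (fun t => varf a t * θ t ^ 2 / 4) (nhdsLT R) (𝓝 0) := by
    refine tendsto_of_tendsto_of_tendsto_of_le_of_le' tendsto_const_nhds hrhs ?_ hkey
    filter_upwards [hev] with t ht
    have := varf_nonneg hK ht.2
    positivity
  have hF : Tendsto (fun t => varf a t * θ t ^ 2) (nhdsLT R) (𝓝 0) := by
    have h1 := hsq.const_mul (4:ℝ)
    rw [mul_zero] at h1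
    refine h1.congr fun t => ?_
    ring
  have hsqrt : Tendsto (fun t => Real.sqrt (varf a t * θ t ^ 2)) (nhdsLT R) (𝓝 0) := by
    have h1 := (Real.continuous_sqrt.tendsto 0).comp hF
    rw [Real.sqrt_zero] at h1
    exact h1
  have hdiv : Tendsto (fun t => Real.sqrt (varf a t * θ t ^ 2) / (mf a t * θ t))
      (nhdsLT R) (𝓝 0) := by
    have h1 := hsqrt.div hmθ one_ne_zero
    rw [zero_div] at h1
    exact h1
  unfold IsClan
  refine Filter.Tendsto.congr' ?_ hdiv
  filter_upwards [hev] with t ht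
  obtain ⟨hTt, htdom⟩ := ht
  have hm := mf_pos hK htdom
  have hu1 : 1 < 1 + 1 / mf a t := by
    have : 0 < 1 / mf a t := by positivity
    linarith
  have hθpos : 0 < θ t := Real.log_pos hu1
  have hv := varf_nonneg hK htdom
  rw [Real.sqrt_mul hv, Real.sqrt_sq hθpos.le]
  show Real.sqrt (varf a t) * θ t / (mf a t * θ t) = sigmaf a t / mf a t
  rw [sigmaf]
  field_simp

end ClanAux

/-- assume `M_f = +∞`. Then `f` is a clan iff (i) there is `T ∈ (0,R)`
with `t + t/m_f(t) < R` for all `t ∈ [T,R)`, and (ii)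
`lim_{t↑R} ln(f(t + t/m_f(t))/f(t)) = 1`. -/
theorem clan_iff_log_quotient (a : ℕ → ℝ) (R : ℝ≥0∞) (hR : 0 < R)
    (hK : IsKClass a R) (hM : Tendsto (mf a) (nhdsLT R) atTop) :
    IsClan a R ↔
      ((∃ T : ℝ, 0 < T ∧ ENNReal.ofReal T < R ∧
          ∀ t : ℝ, T ≤ t → ENNReal.ofReal t < R →
            ENNReal.ofReal (t + t / mf a t) < R) ∧
        Tendsto (fun t => Real.log (fsum a (t + t / mf a t) / fsum a t))
          (nhdsLT R) (𝓝 1)) := by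
  constructor
  · intro hclan
    have hi := ClanAux.forward_i hK hR hM hclan
    exact ⟨hi, ClanAux.forward_ii hK hR hM hclan hi⟩
  · rintro ⟨hi, hii⟩
    exact ClanAux.reverse hK hR hM hi hii
end
end

section
/- Let f be an entire power series in the class K, and let ρ(f) = limsup_{t→∞} ln ln f(t) / ln t ∈ [0,∞] be its order. Then for every real p ≥ 1, limsup_{t→∞} ln( E(X_t^p)^{1/p} ) / ln t = ρ(f). -/
open Filter MeasureTheory Topology Real
open scoped ENNReal

noncomputable section

/-- The order `ρ(f) = limsup_{t→∞} ln ln f(t)/ln t ∈ [0,∞]`. -/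
def orderENN (a : ℕ → ℝ) : ℝ≥0∞ :=
  Filter.limsup (fun t : ℝ => ENNReal.ofReal (Real.log (Real.log (fsum a t)) / Real.log t))
    atTop

namespace KH

variable {a : ℕ → ℝ} (hK : IsKClass a ⊤)
include hK

lemma summable_rpow (β : ℝ) {t : ℝ} (ht : 0 < t) :
    Summable (fun n : ℕ => (n : ℝ) ^ β * a n * t ^ n) :=
  hK.2.2.2.1 β t ht (by simp)

lemma summable_base {t : ℝ} (ht : 0 < t) :
    Summable (fun n : ℕ => a n * t ^ n) := by
  have := summable_rpow hK 0 ht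
  simpa [Real.rpow_zero] using this

lemma summable_lin {t : ℝ} (ht : 0 < t) :
    Summable (fun n : ℕ => (n : ℝ) * a n * t ^ n) := by
  have := summable_rpow hK 1 ht
  simpa [Real.rpow_one] using this

lemma term_nonneg {t : ℝ} (ht : 0 ≤ t) (n : ℕ) : 0 ≤ a n * t ^ n :=
  mul_nonneg (hK.1 n) (pow_nonneg ht n)

lemma a0_le_fsum {t : ℝ} (ht : 0 < t) : a 0 ≤ fsum a t := by
  have h := Summable.le_tsum (summable_base hK ht) 0 (fun i _ => term_nonneg hK ht.le i)
  simpa [fsum] using h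

lemma fsum_pos {t : ℝ} (ht : 0 < t) : 0 < fsum a t :=
  lt_of_lt_of_le hK.2.1 (a0_le_fsum hK ht)

lemma fsum_mono {s u : ℝ} (hs : 0 < s) (hsu : s ≤ u) : fsum a s ≤ fsum a u := by
  refine Summable.tsum_le_tsum (fun n => ?_) (summable_base hK hs) (summable_base hK (hs.trans_le hsu))
  exact mul_le_mul_of_nonneg_left (pow_le_pow_left₀ hs.le hsu n) (hK.1 n)

lemma fsum_tendsto : Tendsto (fsum a) atTop atTop := by
  obtain ⟨n₀, hn₀, han₀⟩ := hK.2.2.1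
  have key : ∀ u : ℝ, 1 ≤ u → a n₀ * u ≤ fsum a u := by
    intro u hu
    have hu0 : (0:ℝ) < u := lt_of_lt_of_le one_pos hu
    have h1 : a n₀ * u ≤ a n₀ * u ^ n₀ := by
      have : u = u ^ 1 := (pow_one u).symm
      nlinarith [pow_le_pow_right₀ hu hn₀, hK.1 n₀, pow_one u]
    have h2 : a n₀ * u ^ n₀ ≤ fsum a u :=
      Summable.le_tsum (summable_base hK hu0) n₀ (fun i _ => term_nonneg hK hu0.le i)
    linarith
  have : Tendsto (fun u : ℝ => a n₀ * u) atTop atTop :=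
    (tendsto_id.const_mul_atTop han₀)
  exact tendsto_atTop_mono' _ (eventually_atTop.2 ⟨1, key⟩) this

lemma num_lin_eq {t : ℝ} (ht : 0 < t) :
    ∑' n : ℕ, (n : ℝ) * a n * t ^ n = mf a t * fsum a t := by
  have hf := (fsum_pos hK ht).ne'
  have : mf a t = (∑' n : ℕ, (n : ℝ) * a n * t ^ n) / fsum a t := by
    simp [mf, moment, Real.rpow_one]
  rw [this, div_mul_cancel₀ _ hf]

lemma mf_pos {t : ℝ} (ht : 0 < t) : 0 < mf a t := by
  obtain ⟨n₀, hn₀, han₀⟩ := hK.2.2.1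
  have hnum : (0:ℝ) < ∑' n : ℕ, (n : ℝ) * a n * t ^ n := by
    have h2 : (n₀ : ℝ) * a n₀ * t ^ n₀ ≤ ∑' n : ℕ, (n : ℝ) * a n * t ^ n :=
      Summable.le_tsum (summable_lin hK ht) n₀
        (fun i _ => mul_nonneg (mul_nonneg (Nat.cast_nonneg i) (hK.1 i)) (pow_nonneg ht.le i))
    have : (0:ℝ) < (n₀ : ℝ) * a n₀ * t ^ n₀ := by
      have hn : (0:ℝ) < (n₀:ℝ) := by exact_mod_cast Nat.lt_of_lt_of_le Nat.zero_lt_one hn₀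
      positivity
    linarith
  have hmf : mf a t = (∑' n : ℕ, (n : ℝ) * a n * t ^ n) / fsum a t := by
    simp [mf, moment, Real.rpow_one]
  rw [hmf]
  exact div_pos hnum (fsum_pos hK ht)


lemma jensen_exp {t r : ℝ} (ht : 0 < t) (hr : 0 < r) :
    fsum a t * r ^ (mf a t) ≤ fsum a (r * t) := by
  set m := mf a t with hm
  set lr := Real.log r with hlr
  have hrt : 0 < r * t := mul_pos hr ht
  have hpt : ∀ n : ℕ, (r ^ m * (1 - m * lr)) * (a n * t ^ n)
      + (r ^ m * lr) * ((n : ℝ) * a n * t ^ n) ≤ a n * (r * t) ^ n := by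
    intro n
    have hscal : r ^ m * (1 + ((n : ℝ) - m) * lr) ≤ r ^ (n : ℕ) := by
      have h1 : lr * ((n : ℝ) - m) + 1 ≤ Real.exp (lr * ((n : ℝ) - m)) :=
        Real.add_one_le_exp _
      have hrm : r ^ m = Real.exp (lr * m) := by
        rw [Real.rpow_def_of_pos hr]
      have hrn : r ^ (n : ℕ) = Real.exp (lr * (n : ℝ)) := by
        rw [← Real.rpow_natCast r n, Real.rpow_def_of_pos hr]
      have h2 : (0 : ℝ) < Real.exp (lr * m) := Real.exp_pos _
      have h3 : Real.exp (lr * m) * (1 + ((n : ℝ) - m) * lr)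
          ≤ Real.exp (lr * m) * Real.exp (lr * ((n : ℝ) - m)) := by
        apply mul_le_mul_of_nonneg_left _ h2.le
        linarith
      have h4 : Real.exp (lr * m) * Real.exp (lr * ((n : ℝ) - m))
          = Real.exp (lr * (n : ℝ)) := by
        rw [← Real.exp_add]; ring_nf
      rw [hrm, hrn]; linarith
    have h6 := mul_le_mul_of_nonneg_left hscal (term_nonneg hK ht.le n)
    calc (r ^ m * (1 - m * lr)) * (a n * t ^ n) + (r ^ m * lr) * ((n : ℝ) * a n * t ^ n)
        = (a n * t ^ n) * (r ^ m * (1 + ((n : ℝ) - m) * lr)) := by ring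
      _ ≤ (a n * t ^ n) * r ^ (n : ℕ) := h6
      _ = a n * (r * t) ^ n := by rw [mul_pow]; ring
  have hs1 : Summable (fun n : ℕ => (r ^ m * (1 - m * lr)) * (a n * t ^ n)) :=
    (summable_base hK ht).mul_left _
  have hs2 : Summable (fun n : ℕ => (r ^ m * lr) * ((n : ℝ) * a n * t ^ n)) :=
    (summable_lin hK ht).mul_left _
  have hsum := Summable.tsum_le_tsum hpt (hs1.add hs2) (summable_base hK hrt)
  rw [Summable.tsum_add hs1 hs2, tsum_mul_left, tsum_mul_left, num_lin_eq hK ht] at hsum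
  have heq : (r ^ m * (1 - m * lr)) * (∑' n : ℕ, a n * t ^ n)
      + (r ^ m * lr) * (m * fsum a t) = fsum a t * r ^ m := by
    have : (∑' n : ℕ, a n * t ^ n) = fsum a t := rfl
    rw [this]; ring
  rw [heq] at hsum
  exact hsum

lemma mf_mul_log_le {t r : ℝ} (ht : 0 < t) (hr : 0 < r) :
    mf a t * Real.log r ≤ Real.log (fsum a (r * t)) - Real.log (fsum a t) := by
  have h := jensen_exp hK ht hr
  have h0 : (0 : ℝ) < fsum a t * r ^ mf a t :=
    mul_pos (fsum_pos hK ht) (Real.rpow_pos_of_pos hr _)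
  have h1 : Real.log (fsum a t * r ^ mf a t) ≤ Real.log (fsum a (r * t)) :=
    Real.log_le_log h0 h
  rw [Real.log_mul (fsum_pos hK ht).ne' (Real.rpow_pos_of_pos hr _).ne',
    Real.log_rpow hr] at h1
  linarith


lemma moment_nonneg (p : ℝ) {t : ℝ} (ht : 0 < t) : 0 ≤ moment a p t := by
  apply div_nonneg _ (fsum_pos hK ht).le
  exact tsum_nonneg fun n =>
    mul_nonneg (mul_nonneg (Real.rpow_nonneg (Nat.cast_nonneg n) _) (hK.1 n)) (pow_nonneg ht.le n)

lemma rpow_mf_le_moment {p t : ℝ} (hp : 1 ≤ p) (ht : 0 < t) :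
    mf a t ^ p ≤ moment a p t := by
  set m := mf a t with hm
  have hmpos : 0 < m := mf_pos hK ht
  have hp0 : (0:ℝ) < p := lt_of_lt_of_le one_pos hp
  have hmp : (0:ℝ) < m ^ p := Real.rpow_pos_of_pos hmpos p
  have h3 : m ^ (p - 1) = m ^ p / m := by
    rw [Real.rpow_sub hmpos, Real.rpow_one]
  have hpt : ∀ n : ℕ, (m ^ p * (1 - p)) * (a n * t ^ n)
      + (p * m ^ (p - 1)) * ((n : ℝ) * a n * t ^ n) ≤ (n : ℝ) ^ p * a n * t ^ n := by
    intro n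
    have hn0 : (0:ℝ) ≤ (n : ℝ) := Nat.cast_nonneg n
    have key := one_add_mul_self_le_rpow_one_add
      (s := (n : ℝ) / m - 1) (by have : 0 ≤ (n:ℝ)/m := div_nonneg hn0 hmpos.le; linarith) hp
    have h1 : (1 : ℝ) + ((n : ℝ) / m - 1) = (n : ℝ) / m := by ring
    rw [h1, Real.div_rpow hn0 hmpos.le] at key
    have h4 := mul_le_mul_of_nonneg_right key hmp.le
    rw [div_mul_cancel₀ _ hmp.ne'] at h4
    have h5 : m ^ p * (1 - p) + (p * m ^ (p - 1)) * (n : ℝ)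
        = (1 + p * ((n : ℝ) / m - 1)) * m ^ p := by
      rw [h3]; field_simp; ring
    have h6 : m ^ p * (1 - p) + (p * m ^ (p-1)) * (n:ℝ) ≤ (n:ℝ) ^ p := by
      rw [h5]; exact h4
    have h7 := mul_le_mul_of_nonneg_right h6 (term_nonneg hK ht.le n)
    calc (m ^ p * (1 - p)) * (a n * t ^ n) + (p * m ^ (p - 1)) * ((n : ℝ) * a n * t ^ n)
        = (m ^ p * (1 - p) + (p * m ^ (p-1)) * (n:ℝ)) * (a n * t ^ n) := by ring
      _ ≤ (n:ℝ) ^ p * (a n * t ^ n) := h7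
      _ = (n : ℝ) ^ p * a n * t ^ n := by ring
  have hs1 : Summable (fun n : ℕ => (m ^ p * (1 - p)) * (a n * t ^ n)) :=
    (summable_base hK ht).mul_left _
  have hs2 : Summable (fun n : ℕ => (p * m ^ (p - 1)) * ((n : ℝ) * a n * t ^ n)) :=
    (summable_lin hK ht).mul_left _
  have hsum := Summable.tsum_le_tsum hpt (hs1.add hs2) (summable_rpow hK p ht)
  rw [Summable.tsum_add hs1 hs2, tsum_mul_left, tsum_mul_left, num_lin_eq hK ht] at hsum
  have heq : (m ^ p * (1 - p)) * (∑' n : ℕ, a n * t ^ n)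
      + (p * m ^ (p - 1)) * (m * fsum a t) = m ^ p * fsum a t := by
    have hfs : (∑' n : ℕ, a n * t ^ n) = fsum a t := rfl
    rw [hfs, h3]; field_simp; ring
  rw [heq] at hsum
  rw [moment, le_div_iff₀ (fsum_pos hK ht)]
  exact hsum

lemma moment_le_upper {p t N : ℝ} (hp : 1 ≤ p) (ht : 0 < t)
    (hpN : p ≤ N * Real.log 2)
    (hNge : Real.log (fsum a (2 * Real.exp 1 * t)) - Real.log (a 0) ≤ N) :
    moment a p t ≤ 2 * N ^ p := by
  have hp0 : (0:ℝ) < p := lt_of_lt_of_le one_pos hp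
  have hlog2 : (0:ℝ) < Real.log 2 := Real.log_pos one_lt_two
  have hN0 : 0 < N := by nlinarith
  set l : ℝ := Real.exp (p / N) with hl
  have hl0 : 0 < l := Real.exp_pos _
  have hl2 : l ≤ 2 := by
    rw [hl, show (2:ℝ) = Real.exp (Real.log 2) from (Real.exp_log two_pos).symm]
    exact Real.exp_le_exp.2 (by rw [div_le_iff₀ hN0]; linarith [mul_comm N (Real.log 2)])
  have hlt : 0 < l * t := mul_pos hl0 ht
  have hNp : (0:ℝ) < N ^ p := Real.rpow_pos_of_pos hN0 p
  -- pointwise bound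
  have hpt : ∀ n : ℕ, (n : ℝ) ^ p * a n * t ^ n
      ≤ N ^ p * (a n * t ^ n) + (N ^ p * Real.exp (-p)) * (a n * (l * t) ^ n) := by
    intro n
    have hterm := term_nonneg hK ht.le n
    have hscal : (n : ℝ) ^ p ≤ N ^ p + N ^ p * Real.exp (-p) * l ^ (n : ℕ) := by
      have hln : l ^ (n:ℕ) = Real.exp ((n : ℝ) * (p / N)) := by
        rw [hl, ← Real.exp_nat_mul]
      rcases le_or_gt ((n : ℝ)) N with hnN | hnN
      · have h1 : (n:ℝ) ^ p ≤ N ^ p := Real.rpow_le_rpow (Nat.cast_nonneg n) hnN hp0.le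
        have h2 : 0 ≤ N ^ p * Real.exp (-p) * l ^ (n:ℕ) := by positivity
        linarith
      · have hn0 : (0:ℝ) < (n:ℝ) := lt_trans hN0 hnN
        have hlog : Real.log ((n:ℝ)) - Real.log N ≤ (n:ℝ) / N - 1 := by
          have := Real.log_le_sub_one_of_pos (div_pos hn0 hN0)
          rwa [Real.log_div hn0.ne' hN0.ne'] at this
        have hmul := mul_le_mul_of_nonneg_left hlog hp0.le
        have hexp : Real.exp (Real.log (n:ℝ) * p) ≤
            Real.exp (Real.log N * p + -p + (n:ℝ) * (p / N)) := by
          apply Real.exp_le_exp.2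
          have hd : (n:ℝ) * (p / N) = p * ((n:ℝ)/N) := by field_simp
          nlinarith [hmul]
        have hrn : (n:ℝ) ^ p = Real.exp (Real.log (n:ℝ) * p) :=
          Real.rpow_def_of_pos hn0 p
        have hrN : N ^ p = Real.exp (Real.log N * p) := Real.rpow_def_of_pos hN0 p
        have h2 : N ^ p * Real.exp (-p) * l ^ (n:ℕ)
            = Real.exp (Real.log N * p + -p + (n:ℝ) * (p / N)) := by
          rw [hrN, hln, ← Real.exp_add, ← Real.exp_add]
        rw [hrn, h2]
        linarith [hNp]
    calc (n : ℝ) ^ p * a n * t ^ n = ((n:ℝ) ^ p) * (a n * t ^ n) := by ring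
      _ ≤ (N ^ p + N ^ p * Real.exp (-p) * l ^ (n:ℕ)) * (a n * t ^ n) := by
          exact mul_le_mul_of_nonneg_right hscal hterm
      _ = N ^ p * (a n * t ^ n) + (N ^ p * Real.exp (-p)) * (a n * (l * t) ^ n) := by
          rw [mul_pow]; ring
  have hs1 : Summable (fun n : ℕ => N ^ p * (a n * t ^ n)) :=
    (summable_base hK ht).mul_left _
  have hs2 : Summable (fun n : ℕ => (N ^ p * Real.exp (-p)) * (a n * (l * t) ^ n)) :=
    (summable_base hK hlt).mul_left _
  have hsum := Summable.tsum_le_tsum hpt (summable_rpow hK p ht) (hs1.add hs2)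
  rw [Summable.tsum_add hs1 hs2, tsum_mul_left, tsum_mul_left] at hsum
  have hflt : fsum a (l * t) ≤ Real.exp p * fsum a t := by
    have hA := mf_mul_log_le hK hlt (r := l⁻¹) (inv_pos.2 hl0)
    rw [show l⁻¹ * (l * t) = t by field_simp, Real.log_inv, hl, Real.log_exp] at hA
    -- hA : mf a (l*t) * -(p/N) ≤ log (fsum a t) - log (fsum a (l*t))
    have hB := mf_mul_log_le hK hlt (r := Real.exp 1) (Real.exp_pos 1)
    rw [Real.log_exp] at hB
    -- hB : mf a (l*t) * 1 ≤ log (fsum a (e*(l*t))) - log (fsum a (l*t))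
    have hC : fsum a (Real.exp 1 * (l * t)) ≤ fsum a (2 * Real.exp 1 * t) := by
      apply fsum_mono hK (by positivity)
      have h := mul_le_mul_of_nonneg_left hl2 (le_of_lt (mul_pos (Real.exp_pos 1) ht))
      nlinarith [h]
    have hD : Real.log (fsum a (Real.exp 1 * (l * t))) ≤ Real.log (fsum a (2 * Real.exp 1 * t)) :=
      Real.log_le_log (fsum_pos hK (by positivity)) hC
    have hE : Real.log (a 0) ≤ Real.log (fsum a (l * t)) :=
      Real.log_le_log hK.2.1 (a0_le_fsum hK hlt)
    have hmfN : mf a (l * t) ≤ N := by nlinarith [hB, hD, hE, hNge]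
    have hmf0 : 0 < mf a (l * t) := mf_pos hK hlt
    have hF : Real.log (fsum a (l * t)) ≤ Real.log (fsum a t) + p := by
      have hdiv : mf a (l * t) * (p / N) ≤ p := by
        rw [div_eq_mul_inv]
        have := mul_le_mul_of_nonneg_right hmfN (le_of_lt (mul_pos hp0 (inv_pos.2 hN0)))
        calc mf a (l*t) * (p * N⁻¹) ≤ N * (p * N⁻¹) := this
          _ = p := by field_simp
      nlinarith [hA]
    calc fsum a (l * t) = Real.exp (Real.log (fsum a (l * t))) :=
          (Real.exp_log (fsum_pos hK hlt)).symm
      _ ≤ Real.exp (Real.log (fsum a t) + p) := Real.exp_le_exp.2 hF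
      _ = Real.exp p * fsum a t := by
          rw [Real.exp_add, Real.exp_log (fsum_pos hK ht)]; ring
  have hnum : (∑' n : ℕ, (n : ℝ) ^ p * a n * t ^ n) ≤ 2 * N ^ p * fsum a t := by
    have h1 : N ^ p * Real.exp (-p) * fsum a (l * t)
        ≤ N ^ p * Real.exp (-p) * (Real.exp p * fsum a t) :=
      mul_le_mul_of_nonneg_left hflt (by positivity)
    have h2 : N ^ p * Real.exp (-p) * (Real.exp p * fsum a t) = N ^ p * fsum a t := by
      have e1 : Real.exp (-p) * Real.exp p = 1 := by rw [← Real.exp_add]; simp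
      linear_combination N ^ p * fsum a t * e1
    have hfs : (∑' n : ℕ, a n * (l*t) ^ n) = fsum a (l * t) := rfl
    rw [hfs] at hsum
    have hfs2 : (∑' n : ℕ, a n * t ^ n) = fsum a t := rfl
    rw [hfs2] at hsum
    nlinarith [hsum]
  rw [moment, div_le_iff₀ (fsum_pos hK ht)]
  linarith [hnum]


lemma log_mom_lower {p t : ℝ} (hp : 1 ≤ p) (ht : 0 < t) :
    Real.log (mf a t) ≤ Real.log (moment a p t ^ (1 / p)) := by
  have hp0 : (0:ℝ) < p := lt_of_lt_of_le one_pos hp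
  have hm := mf_pos hK ht
  have h1 : mf a t ≤ moment a p t ^ (1/p) := by
    have h := rpow_mf_le_moment hK hp ht
    have h2 := Real.rpow_le_rpow (Real.rpow_nonneg hm.le p) h (by positivity : (0:ℝ) ≤ 1/p)
    rwa [← Real.rpow_mul hm.le, mul_one_div_cancel hp0.ne', Real.rpow_one] at h2
  exact Real.log_le_log hm h1

lemma mom_rpow_pos {p t : ℝ} (hp : 1 ≤ p) (ht : 0 < t) : 0 < moment a p t ^ (1 / p) := by
  have hm := mf_pos hK ht
  have h := rpow_mf_le_moment hK hp ht
  have : (0:ℝ) < moment a p t := lt_of_lt_of_le (Real.rpow_pos_of_pos hm p) h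
  positivity

lemma mom_upper {p t N : ℝ} (hp : 1 ≤ p) (ht : 0 < t) (hpN : p ≤ N * Real.log 2)
    (hNge : Real.log (fsum a (2 * Real.exp 1 * t)) - Real.log (a 0) ≤ N) :
    moment a p t ^ (1 / p) ≤ 2 * N := by
  have hp0 : (0:ℝ) < p := lt_of_lt_of_le one_pos hp
  have hlog2 : (0:ℝ) < Real.log 2 := Real.log_pos one_lt_two
  have hN0 : 0 < N := by nlinarith
  have h := moment_le_upper hK hp ht hpN hNge
  have h2 : moment a p t ≤ (2 * N) ^ p := by
    have h3 : (2:ℝ) ^ (1:ℝ) ≤ 2 ^ p := Real.rpow_le_rpow_of_exponent_le one_le_two hp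
    rw [Real.rpow_one] at h3
    have h4 : (0:ℝ) < N ^ p := Real.rpow_pos_of_pos hN0 p
    rw [Real.mul_rpow (by norm_num) hN0.le]
    nlinarith
  have h5 := Real.rpow_le_rpow (moment_nonneg hK p ht) h2 (by positivity : (0:ℝ) ≤ 1/p)
  rwa [← Real.rpow_mul (by positivity : (0:ℝ) ≤ 2*N), mul_one_div_cancel hp0.ne',
    Real.rpow_one] at h5


set_option maxHeartbeats 1000000 in
theorem main :
    ∀ p : ℝ, 1 ≤ p →
      Filter.limsup
        (fun t : ℝ => ENNReal.ofReal (Real.log (moment a p t ^ (1 / p)) / Real.log t))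
        atTop = orderENN a := by
  intro p hp
  have hp0 : (0:ℝ) < p := lt_of_lt_of_le one_pos hp
  have hlog2 : (0:ℝ) < Real.log 2 := Real.log_pos one_lt_two
  have h2e : (0:ℝ) < 2 * Real.exp 1 := by positivity
  have htend2e : Tendsto (fun t : ℝ => 2 * Real.exp 1 * t) atTop atTop :=
    Tendsto.const_mul_atTop h2e tendsto_id
  set G : ℝ → ℝ := fun t => Real.log (moment a p t ^ (1 / p)) / Real.log t with hG
  set Hf : ℝ → ℝ := fun t => Real.log (Real.log (fsum a t)) / Real.log t with hHf
  have horder : orderENN a = Filter.limsup (fun t => ENNReal.ofReal (Hf t)) atTop := rfl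
  apply le_antisymm
  · -- limsup G ≤ orderENN a
    rcases eq_or_ne (orderENN a) ⊤ with htop | hne
    · rw [htop]; exact le_top
    by_contra hlt
    push_neg at hlt
    obtain ⟨d, hd1, hd2⟩ := exists_between hlt
    obtain ⟨d', hdd', hd2'⟩ := exists_between hd2
    have hdtop : d ≠ ⊤ := hdd'.ne_top
    have hd'top : d' ≠ ⊤ := hd2'.ne_top
    set q := d.toReal with hqdef
    set q' := d'.toReal with hq'def
    have hq0 : 0 < q := ENNReal.toReal_pos ((lt_of_le_of_lt zero_le hd1).ne') hdtop
    have hqq' : q < q' := by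
      rw [hqdef, hq'def]
      exact (ENNReal.toReal_lt_toReal hdtop hd'top).2 hdd'
    have hqd : ENNReal.ofReal q = d := ENNReal.ofReal_toReal hdtop
    have hq'd : ENNReal.ofReal q' = d' := ENNReal.ofReal_toReal hd'top
    -- eventually Hf t < q
    have hev : ∀ᶠ t in atTop, ENNReal.ofReal (Hf t) < d :=
      eventually_lt_of_limsup_lt (horder ▸ hd1)
    have hev2 : ∀ᶠ t in atTop, Hf t < q := by
      filter_upwards [hev] with t h
      by_contra hc
      push_neg at hc
      exact absurd (hqd ▸ ENNReal.ofReal_le_ofReal hc) (not_le.2 h)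
    -- constant
    set C₂ : ℝ := (2 * Real.exp 1) ^ q + 1 + |Real.log (a 0)| with hC₂def
    have hC₂0 : 0 < C₂ := by positivity
    set C₃ : ℝ := Real.log 2 + Real.log C₂ with hC₃def
    -- eventual facts
    have Ntend : Tendsto (fun t => Real.log (fsum a (2 * Real.exp 1 * t)) - Real.log (a 0))
        atTop atTop := by
      have h1 : Tendsto (fun t => Real.log (fsum a (2 * Real.exp 1 * t))) atTop atTop :=
        tendsto_log_atTop.comp ((fsum_tendsto hK).comp htend2e)
      simpa [sub_eq_add_neg] using tendsto_atTop_add_const_right atTop (-Real.log (a 0)) h1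
    have e1 : ∀ᶠ t : ℝ in atTop, 1 < t := eventually_gt_atTop 1
    have e2 : ∀ᶠ t : ℝ in atTop,
        max 1 (p / Real.log 2) ≤ Real.log (fsum a (2 * Real.exp 1 * t)) - Real.log (a 0) :=
      Ntend.eventually_ge_atTop _
    have e3 : ∀ᶠ t : ℝ in atTop, 1 ≤ Real.log (fsum a (2 * Real.exp 1 * t)) :=
      (tendsto_log_atTop.comp ((fsum_tendsto hK).comp htend2e)).eventually_ge_atTop 1
    have e4 : ∀ᶠ t : ℝ in atTop, Hf (2 * Real.exp 1 * t) < q := htend2e.eventually hev2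
    have e5 : ∀ᶠ t : ℝ in atTop, C₃ / (q' - q) ≤ Real.log t :=
      tendsto_log_atTop.eventually_ge_atTop _
    have key : ∀ᶠ t : ℝ in atTop, G t ≤ q' := by
      filter_upwards [e1, e2, e3, e4, e5] with t h1 h2 h3 h4 h5
      have ht0 : (0:ℝ) < t := lt_trans one_pos h1
      have hlt : (0:ℝ) < Real.log t := Real.log_pos h1
      set N := Real.log (fsum a (2 * Real.exp 1 * t)) - Real.log (a 0) with hN
      have hN1 : 1 ≤ N := le_trans (le_max_left _ _) h2
      have hpN : p ≤ N * Real.log 2 := by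
        have := le_trans (le_max_right _ _) h2
        rw [div_le_iff₀ hlog2] at this
        linarith
      have hup := mom_upper hK hp ht0 hpN (le_refl N)
      have hmpos := mom_rpow_pos hK hp ht0
      have hlogup : Real.log (moment a p t ^ (1/p)) ≤ Real.log 2 + Real.log N := by
        have := Real.log_le_log hmpos hup
        rwa [Real.log_mul (by norm_num) (by linarith : N ≠ 0)] at this
      -- bound log N
      set u := 2 * Real.exp 1 * t with hu
      have hu1 : (1:ℝ) < u := by nlinarith [Real.exp_one_gt_d9]
      have hulog : (0:ℝ) < Real.log u := Real.log_pos hu1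
      have hfu1 : (0:ℝ) < Real.log (fsum a u) := lt_of_lt_of_le one_pos h3
      have hflt : Real.log (fsum a u) < u ^ q := by
        have h4' : Real.log (Real.log (fsum a u)) < q * Real.log u := by
          rw [hHf] at h4
          have := (div_lt_iff₀ hulog).1 h4
          linarith
        calc Real.log (fsum a u) = Real.exp (Real.log (Real.log (fsum a u))) :=
              (Real.exp_log hfu1).symm
          _ < Real.exp (q * Real.log u) := Real.exp_lt_exp.2 h4'
          _ = u ^ q := by rw [Real.rpow_def_of_pos (lt_trans one_pos hu1), mul_comm]
      have huq : u ^ q = (2 * Real.exp 1) ^ q * t ^ q := Real.mul_rpow h2e.le ht0.le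
      have htq1 : (1:ℝ) ≤ t ^ q := Real.one_le_rpow h1.le hq0.le
      have hNle : N ≤ C₂ * t ^ q := by
        have habs : -Real.log (a 0) ≤ |Real.log (a 0)| := neg_le_abs _
        have h7 : (1 + |Real.log (a 0)|) * 1 ≤ (1 + |Real.log (a 0)|) * t ^ q :=
          mul_le_mul_of_nonneg_left htq1 (by positivity)
        rw [mul_one] at h7
        rw [hC₂def]
        linarith [hN, hflt, habs, huq, h7]
      have hlogN : Real.log N ≤ Real.log C₂ + q * Real.log t := by
        have := Real.log_le_log (by linarith : (0:ℝ) < N) hNle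
        rwa [Real.log_mul hC₂0.ne' (by positivity : t ^ q ≠ 0), Real.log_rpow ht0] at this
      -- conclude
      have hC₃le : C₃ ≤ (q' - q) * Real.log t := by
        rw [div_le_iff₀ (by linarith : (0:ℝ) < q' - q)] at h5
        linarith
      rw [hG]
      rw [div_le_iff₀ hlt]
      calc Real.log (moment a p t ^ (1/p)) ≤ C₃ + q * Real.log t := by
            rw [hC₃def]; linarith
        _ ≤ (q' - q) * Real.log t + q * Real.log t := by linarith
        _ = q' * Real.log t := by ring
    have : Filter.limsup (fun t : ℝ => ENNReal.ofReal (G t)) atTop ≤ d' := by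
      refine limsup_le_of_le (by isBoundedDefault) ?_
      filter_upwards [key] with t h
      rw [← hq'd]
      exact ENNReal.ofReal_le_ofReal h
    exact absurd this (not_le.2 hd2')
  · -- orderENN a ≤ limsup G
    by_contra hlt
    push_neg at hlt
    obtain ⟨d, hd1, hd2⟩ := exists_between hlt
    obtain ⟨d', hdd', hd2'⟩ := exists_between hd2
    have hdtop : d ≠ ⊤ := hdd'.ne_top
    have hd'top : d' ≠ ⊤ := hd2'.ne_top
    set q := d.toReal with hqdef
    set q' := d'.toReal with hq'def
    have hq0 : 0 < q := ENNReal.toReal_pos ((lt_of_le_of_lt zero_le hd1).ne') hdtop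
    have hq'0 : 0 < q' := lt_trans hq0 (by
      rw [hqdef, hq'def]; exact (ENNReal.toReal_lt_toReal hdtop hd'top).2 hdd')
    have hqq' : q < q' := by
      rw [hqdef, hq'def]; exact (ENNReal.toReal_lt_toReal hdtop hd'top).2 hdd'
    have hqd : ENNReal.ofReal q = d := ENNReal.ofReal_toReal hdtop
    have hq'd : ENNReal.ofReal q' = d' := ENNReal.ofReal_toReal hd'top
    have hfreq : ∃ᶠ t in atTop, d' < ENNReal.ofReal (Hf t) :=
      frequently_lt_of_lt_limsup (by isBoundedDefault) (horder ▸ hd2')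
    have hfreq2 : ∃ᶠ t in atTop, q' < Hf t := by
      apply hfreq.mono
      intro t h
      by_contra hc
      push_neg at hc
      exact absurd (hq'd ▸ ENNReal.ofReal_le_ofReal hc) (not_le.2 h)
    set C₁ : ℝ := |Real.log (fsum a 1)| with hC₁
    have e1 : ∀ᶠ t : ℝ in atTop, 1 < t := eventually_gt_atTop 1
    have e2 : ∀ᶠ t : ℝ in atTop, Real.exp 1 ≤ fsum a t :=
      (fsum_tendsto hK).eventually_ge_atTop _
    have e3 : ∀ᶠ t : ℝ in atTop, 2 * C₁ + 2 ≤ t ^ q' :=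
      (tendsto_rpow_atTop hq'0).eventually_ge_atTop _
    have e4 : ∀ᶠ t : ℝ in atTop, (Real.log 2 + Real.log (Real.log t)) / Real.log t ≤ q' - q := by
      have ht1 : Tendsto (fun t : ℝ => Real.log 2 / Real.log t) atTop (nhds 0) :=
        tendsto_const_nhds.div_atTop tendsto_log_atTop
      have ht2 : Tendsto (fun t : ℝ => Real.log (Real.log t) / Real.log t) atTop (nhds 0) :=
        (Real.isLittleO_log_id_atTop.comp_tendsto tendsto_log_atTop).tendsto_div_nhds_zero
      have ht3 : Tendsto (fun t : ℝ => (Real.log 2 + Real.log (Real.log t)) / Real.log t)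
          atTop (nhds 0) := by
        have := ht1.add ht2
        rw [add_zero] at this
        apply this.congr
        intro t
        rw [← add_div]
      have := ht3.eventually (Iio_mem_nhds (by linarith : (0:ℝ) < q' - q))
      exact this.mono fun t ht => le_of_lt ht
    have key : ∃ᶠ t in atTop, q ≤ G t := by
      apply ((hfreq2.and_eventually (e1.and (e2.and (e3.and e4)))).mono)
      rintro t ⟨hq', h1, h2, h3, h4⟩
      have ht0 : (0:ℝ) < t := lt_trans one_pos h1
      have hlt : (0:ℝ) < Real.log t := Real.log_pos h1
      have hy1 : (1:ℝ) ≤ Real.log (fsum a t) := by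
        have := Real.log_le_log (Real.exp_pos 1) h2
        rwa [Real.log_exp] at this
      have hygt : t ^ q' < Real.log (fsum a t) := by
        have h5 : q' * Real.log t < Real.log (Real.log (fsum a t)) := by
          rw [hHf] at hq'
          have := (lt_div_iff₀ hlt).1 hq'
          linarith
        calc t ^ q' = Real.exp (q' * Real.log t) := by
              rw [Real.rpow_def_of_pos ht0, mul_comm]
          _ < Real.exp (Real.log (Real.log (fsum a t))) := Real.exp_lt_exp.2 h5
          _ = Real.log (fsum a t) := Real.exp_log (by linarith)
      -- mean lower bound
      have hmean : Real.log (fsum a t) - Real.log (fsum a 1) ≤ mf a t * Real.log t := by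
        have h6 := mf_mul_log_le hK ht0 (r := t⁻¹) (inv_pos.2 ht0)
        rw [inv_mul_cancel₀ ht0.ne', Real.log_inv] at h6
        nlinarith [h6]
      have hC₁' : Real.log (fsum a 1) ≤ C₁ := le_abs_self _
      have hm0 : 0 < mf a t := mf_pos hK ht0
      have hmlow : t ^ q' / (2 * Real.log t) ≤ mf a t := by
        rw [div_le_iff₀ (by positivity)]
        nlinarith [hygt, hmean, hC₁', h3]
      have hlogm : q' * Real.log t - (Real.log 2 + Real.log (Real.log t)) ≤ Real.log (mf a t) := by
        have h7 : (0:ℝ) < t ^ q' / (2 * Real.log t) := by positivity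
        have h8 := Real.log_le_log h7 hmlow
        rw [Real.log_div (by positivity) (by positivity), Real.log_mul (by norm_num) hlt.ne',
          Real.log_rpow ht0] at h8
        linarith
      have hlow := log_mom_lower hK hp ht0
      rw [hG]
      rw [le_div_iff₀ hlt]
      have h9 : (Real.log 2 + Real.log (Real.log t)) ≤ (q' - q) * Real.log t := by
        rw [div_le_iff₀ hlt] at h4
        linarith
      nlinarith [hlow, hlogm, h9]
    have : d ≤ Filter.limsup (fun t : ℝ => ENNReal.ofReal (G t)) atTop := by
      refine le_limsup_of_frequently_le ?_ (by isBoundedDefault)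
      apply key.mono
      intro t h
      rw [← hqd]
      exact ENNReal.ofReal_le_ofReal h
    exact absurd this (not_le.2 hd1)


end KH

/-- for `f ∈ K` entire of order `ρ(f)`, for every `p ≥ 1`,
`limsup_{t→∞} ln(E(X_t^p)^{1/p})/ln t = ρ(f)`. -/
theorem order_eq_limsup_moments (a : ℕ → ℝ) (hK : IsKClass a ⊤) :
    ∀ p : ℝ, 1 ≤ p →
      Filter.limsup
        (fun t : ℝ => ENNReal.ofReal (Real.log (moment a p t ^ (1 / p)) / Real.log t))
        atTop = orderENN a := by
  exact KH.main hK
end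
end

section
/- Let (b_j)_{j≥1} be an increasing sequence of positive real numbers with Σ_{j≥1} 1/b_j < ∞, and let f(z) = Π_{j≥1} (1 + z/b_j) be the associated canonical product, an entire function with nonnegative Taylor coefficients and f(0) = 1. Then f is a clan: its mean m_f(t) = Σ_{j≥1} t/(t + b_j) and variance σ_f²(t) = Σ_{j≥1} b_j t/(t + b_j)² satisfy lim_{t→∞} σ_f(t)/m_f(t) = 0. Moreover, for every t > 0 one has σ_f²(t) < m_f(t). -/
open Filter Topology Real

private lemma m_summable (b : ℕ → ℝ) (hpos : ∀ j, 0 < b j)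
    (hsum : Summable (fun j => 1 / b j)) {t : ℝ} (ht : 0 < t) :
    Summable (fun j => t / (t + b j)) := by
  refine Summable.of_nonneg_of_le (fun j => by have := hpos j; positivity) (fun j => ?_)
    (hsum.mul_left t)
  rw [mul_one_div]
  exact div_le_div_of_nonneg_left ht.le (hpos j) (by linarith [hpos j])

private lemma var_le (b : ℕ → ℝ) (hpos : ∀ j, 0 < b j) {t : ℝ} (ht : 0 < t) (j : ℕ) :
    b j * t / (t + b j) ^ 2 ≤ t / (t + b j) := by
  have hb := hpos j
  rw [div_le_div_iff₀ (by positivity) (by positivity)]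
  nlinarith [mul_pos (mul_pos ht ht) (show (0:ℝ) < t + b j by linarith)]

private lemma var_lt (b : ℕ → ℝ) (hpos : ∀ j, 0 < b j)
    (hsum : Summable (fun j => 1 / b j)) {t : ℝ} (ht : 0 < t) :
    (∑' j : ℕ, b j * t / (t + b j) ^ 2) < ∑' j : ℕ, t / (t + b j) := by
  refine Summable.tsum_lt_tsum_of_nonneg (i := 0) (fun j => by have := hpos j; positivity)
    (var_le b hpos ht) ?_ (m_summable b hpos hsum ht)
  have hb := hpos 0
  rw [div_lt_div_iff₀ (by positivity) (by positivity)]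
  nlinarith [mul_pos (mul_pos ht ht) (show (0:ℝ) < t + b 0 by linarith)]

private lemma m_tendsto (b : ℕ → ℝ) (hpos : ∀ j, 0 < b j) (hmono : Monotone b)
    (hsum : Summable (fun j => 1 / b j)) :
    Tendsto (fun t : ℝ => ∑' j : ℕ, t / (t + b j)) atTop atTop := by
  rw [tendsto_atTop]
  intro M
  obtain ⟨N, hN⟩ := exists_nat_gt (2 * M)
  filter_upwards [eventually_ge_atTop (b N), eventually_gt_atTop (0 : ℝ)] with t htN ht
  have hsum' := m_summable b hpos hsum ht
  have h1 : ∑ j ∈ Finset.range N, t / (t + b j) ≤ ∑' j : ℕ, t / (t + b j) :=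
    Summable.sum_le_tsum _ (fun j _ => by have := hpos j; positivity) hsum'
  have h2 : (N : ℝ) * (1 / 2) ≤ ∑ j ∈ Finset.range N, t / (t + b j) := by
    have : ∑ j ∈ Finset.range N, (1 / 2 : ℝ) ≤ ∑ j ∈ Finset.range N, t / (t + b j) := by
      refine Finset.sum_le_sum (fun j hj => ?_)
      have hbj : b j ≤ t := le_trans (hmono (Finset.mem_range.mp hj).le) htN
      rw [div_le_div_iff₀ (by norm_num) (by have := hpos j; linarith)]
      linarith
    simpa using this
  have : M < (N : ℝ) * (1 / 2) := by linarith
  linarith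

/-- for an increasing sequence `(b_j)` of positive reals with
`Σ 1/b_j < ∞`, the canonical product `f(z) = Π (1 + z/b_j)` is a clan:
its mean `m_f(t) = Σ t/(t + b_j)` and variance `σ_f²(t) = Σ b_j t/(t + b_j)²`
satisfy `σ_f(t)/m_f(t) → 0` as `t → ∞`; moreover `σ_f²(t) < m_f(t)` for all `t > 0`. -/
theorem canonical_product_isClan (b : ℕ → ℝ) (hpos : ∀ j, 0 < b j)
    (hmono : Monotone b) (hsum : Summable (fun j => 1 / b j)) :
    Tendsto
        (fun t : ℝ =>
          Real.sqrt (∑' j : ℕ, b j * t / (t + b j) ^ 2) / (∑' j : ℕ, t / (t + b j)))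
        atTop (𝓝 0) ∧
      ∀ t : ℝ, 0 < t →
        (∑' j : ℕ, b j * t / (t + b j) ^ 2) < ∑' j : ℕ, t / (t + b j) := by
  refine ⟨?_, fun t ht => var_lt b hpos hsum ht⟩
  have hm := m_tendsto b hpos hmono hsum
  have hsq : Tendsto (fun t : ℝ => Real.sqrt (∑' j : ℕ, t / (t + b j))) atTop atTop := by
    rw [tendsto_atTop]
    intro C
    filter_upwards [hm.eventually_ge_atTop ((max C 0) ^ 2)] with t hmt
    calc C ≤ max C 0 := le_max_left _ _
      _ = Real.sqrt ((max C 0) ^ 2) := (Real.sqrt_sq (le_max_right _ _)).symm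
      _ ≤ _ := Real.sqrt_le_sqrt hmt
  have hinv : Tendsto (fun t : ℝ => 1 / Real.sqrt (∑' j : ℕ, t / (t + b j))) atTop (𝓝 0) := by
    simp only [one_div]
    exact hsq.inv_tendsto_atTop
  refine squeeze_zero' ?_ ?_ hinv
  · filter_upwards [hm.eventually_gt_atTop 0] with t hmt
    positivity
  · filter_upwards [hm.eventually_gt_atTop 0, eventually_gt_atTop (0 : ℝ)] with t hmt ht
    have hvar : (∑' j : ℕ, b j * t / (t + b j) ^ 2) ≤ ∑' j : ℕ, t / (t + b j) :=
      (var_lt b hpos hsum ht).le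
    have h1 : Real.sqrt (∑' j : ℕ, b j * t / (t + b j) ^ 2)
        ≤ Real.sqrt (∑' j : ℕ, t / (t + b j)) := Real.sqrt_le_sqrt hvar
    rw [div_le_div_iff₀ hmt (by positivity)]
    calc Real.sqrt (∑' j : ℕ, b j * t / (t + b j) ^ 2) * Real.sqrt (∑' j : ℕ, t / (t + b j))
        ≤ Real.sqrt (∑' j : ℕ, t / (t + b j)) * Real.sqrt (∑' j : ℕ, t / (t + b j)) := by
          exact mul_le_mul_of_nonneg_right h1 (Real.sqrt_nonneg _)
      _ = ∑' j : ℕ, t / (t + b j) := Real.mul_self_sqrt hmt.le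
      _ = 1 * (∑' j : ℕ, t / (t + b j)) := by ring
end
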